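/- arXiv:1612.08422 — 12 statements merged into one kernel-verified Lean document; each statement's English description precedes it below -/
import Mathlib

section
/- If A, B, C are three points that are not collinear (i.e., not all contained in the point-set of a single line), then the set of planes incident to all of A, B, C is a singleton. -/
variable {Point Plane : Type*}

/-- The set of planes incident to every point of `S` (the operation `S^♮`). -/
def planesOf (inc : Point → Plane → Prop) (S : Set Point) : Set Plane :=
  {π | ∀ A ∈ S, inc A π}

/-- The set of points incident to every plane of `T` (the operation `T^♮`). -/
def pointsOf (inc : Point → Plane → Prop) (T : Set Plane) : Set Point :=
  {A | ∀ π ∈ T, inc A π}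

/-- A set with more than two elements. -/
def AtLeastThree {α : Type*} (S : Set α) : Prop :=
  ∃ x y z, x ∈ S ∧ y ∈ S ∧ z ∈ S ∧ x ≠ y ∧ x ≠ z ∧ y ≠ z

/-- AXIOM [1]. -/
def Axiom1 (inc : Point → Plane → Prop) : Prop :=
  (∀ A : Point, planesOf inc {A} ≠ Set.univ) ∧
  (∀ π : Plane, pointsOf inc {π} ≠ Set.univ)

/-- AXIOM [2]. -/
def Axiom2 (inc : Point → Plane → Prop) : Prop :=
  (∀ A B : Point, AtLeastThree (planesOf inc {A, B})) ∧
  (∀ α β : Plane, AtLeastThree (pointsOf inc {α, β}))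

/-- AXIOM [3]. -/
def Axiom3 (inc : Point → Plane → Prop) : Prop :=
  (∀ A B C : Point, planesOf inc {A, B, C} ≠ ∅) ∧
  (∀ α β γ : Plane, pointsOf inc {α, β, γ} ≠ ∅)

/-- AXIOM [4]. -/
def Axiom4 (inc : Point → Plane → Prop) : Prop :=
  ∀ (A B : Point) (α β : Plane), A ≠ B → α ≠ β →
    inc A α → inc A β → inc B α → inc B β →
    planesOf inc {A, B} = planesOf inc (pointsOf inc {α, β}) ∧
    pointsOf inc {α, β} = pointsOf inc (planesOf inc {A, B})

/-- A line, given by its point-set `lP` and plane-set `lPl`. -/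
def IsLine (inc : Point → Plane → Prop) (lP : Set Point) (lPl : Set Plane) : Prop :=
  ∃ (A B : Point) (α β : Plane), A ≠ B ∧ α ≠ β ∧
    inc A α ∧ inc A β ∧ inc B α ∧ inc B β ∧
    lP = pointsOf inc {α, β} ∧ lPl = planesOf inc {A, B}

def CollinearPoints (inc : Point → Plane → Prop) (S : Set Point) : Prop :=
  ∃ lP lPl, IsLine inc lP lPl ∧ S ⊆ lP

def CollinearPlanes (inc : Point → Plane → Prop) (T : Set Plane) : Prop :=
  ∃ lP lPl, IsLine inc lP lPl ∧ T ⊆ lPl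

/-- A complete quadrangle `Q 0 Q 1 Q 2 Q 3` in the plane `π`. -/
def CompleteQuadrangle (inc : Point → Plane → Prop) (π : Plane) (Q : Fin 4 → Point) : Prop :=
  (∀ i : Fin 4, inc (Q i) π) ∧
  ∀ i j k : Fin 4, i ≠ j → i ≠ k → j ≠ k → planesOf inc {Q i, Q j, Q k} = {π}

theorem three_noncollinear_points_lie_in_unique_plane (inc : Point → Plane → Prop) [Nonempty Point] [Nonempty Plane]
    (h1 : Axiom1 inc) (h2 : Axiom2 inc) (h3 : Axiom3 inc) (h4 : Axiom4 inc)
    (A B C : Point) (h : ¬ CollinearPoints inc {A, B, C}) :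
    ∃ π : Plane, planesOf inc {A, B, C} = {π} := by
  obtain ⟨π, hπ⟩ := Set.nonempty_iff_ne_empty.2 (h3.1 A B C)
  refine ⟨π, Set.eq_singleton_iff_unique_mem.2 ⟨hπ, ?_⟩⟩
  intro τ hτ
  by_contra hne
  -- τ and π are two distinct planes through A, B, C
  obtain ⟨x, y, z, hx, hy, hz, hxy, hxz, hyz⟩ := h2.2 τ π
  apply h
  refine ⟨pointsOf inc {τ, π}, planesOf inc {x, y},
    ⟨x, y, τ, π, hxy, hne, ?_, ?_, ?_, ?_, rfl, rfl⟩, ?_⟩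
  · exact hx τ (Or.inl rfl)
  · exact hx π (Or.inr rfl)
  · exact hy τ (Or.inl rfl)
  · exact hy π (Or.inr rfl)
  · intro P hP σ hσ
    rcases hσ with rfl | rfl
    · exact hτ P hP
    · exact hπ P hP
end

section
/- If m and n are distinct lines, then m_P ∩ n_P ≠ ∅ if and only if m_Π ∩ n_Π ≠ ∅; moreover, when these equivalent conditions hold, |m_P ∩ n_P| = 1 and |m_Π ∩ n_Π| = 1. -/
variable {Point Plane : Type*}

lemma line_key {Point Plane : Type*} {inc : Point → Plane → Prop}
    (h4 : Axiom4 inc) {lP : Set Point} {lPl : Set Plane} (hl : IsLine inc lP lPl) :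
    (∃ A B, A ≠ B ∧ A ∈ lP ∧ B ∈ lP) ∧
    (∃ α β, α ≠ β ∧ α ∈ lPl ∧ β ∈ lPl) ∧
    (∀ C D, C ∈ lP → D ∈ lP → C ≠ D →
      planesOf inc {C, D} = lPl ∧ pointsOf inc (planesOf inc {C, D}) = lP) ∧
    (∀ γ δ, γ ∈ lPl → δ ∈ lPl → γ ≠ δ →
      pointsOf inc {γ, δ} = lP ∧ planesOf inc (pointsOf inc {γ, δ}) = lPl) := by
  obtain ⟨A, B, α, β, hAB, hab, hAa, hAb, hBa, hBb, hP, hPl⟩ := hl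
  have memP : ∀ C, inc C α → inc C β → C ∈ lP := by
    intro C h1 h2
    rw [hP]
    rintro π (rfl | hπ)
    · exact h1
    · rw [Set.mem_singleton_iff] at hπ; subst hπ; exact h2
  have memPl : ∀ γ, inc A γ → inc B γ → γ ∈ lPl := by
    intro γ h1 h2
    rw [hPl]
    rintro C (rfl | hC)
    · exact h1
    · rw [Set.mem_singleton_iff] at hC; subst hC; exact h2
  have incP : ∀ C ∈ lP, inc C α ∧ inc C β := by
    intro C hC
    rw [hP] at hC
    exact ⟨hC α (Set.mem_insert _ _), hC β (Set.mem_insert_of_mem _ rfl)⟩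
  have incPl : ∀ γ ∈ lPl, inc A γ ∧ inc B γ := by
    intro γ hγ
    rw [hPl] at hγ
    exact ⟨hγ A (Set.mem_insert _ _), hγ B (Set.mem_insert_of_mem _ rfl)⟩
  have hABkey := h4 A B α β hAB hab hAa hAb hBa hBb
  refine ⟨⟨A, B, hAB, memP A hAa hAb, memP B hBa hBb⟩,
    ⟨α, β, hab, memPl α hAa hBa, memPl β hAb hBb⟩, ?_, ?_⟩
  · intro C D hC hD hCD
    obtain ⟨hCa, hCb⟩ := incP C hC
    obtain ⟨hDa, hDb⟩ := incP D hD
    have hkey := h4 C D α β hCD hab hCa hCb hDa hDb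
    constructor
    · rw [hkey.1, ← hABkey.1, hPl]
    · rw [hkey.1, ← hABkey.1, ← hABkey.2, hP]
  · intro γ δ hγ hδ hγδ
    obtain ⟨hAγ, hBγ⟩ := incPl γ hγ
    obtain ⟨hAδ, hBδ⟩ := incPl δ hδ
    have hkey := h4 A B γ δ hAB hγδ hAγ hAδ hBγ hBδ
    constructor
    · rw [hkey.2, ← hABkey.2, hP]
    · rw [hkey.2, ← hABkey.2, ← hABkey.1, hPl]

theorem distinct_lines_meet (inc : Point → Plane → Prop) [Nonempty Point] [Nonempty Plane]
    (h1 : Axiom1 inc) (h2 : Axiom2 inc) (h3 : Axiom3 inc) (h4 : Axiom4 inc)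
    (mP nP : Set Point) (mPl nPl : Set Plane)
    (hm : IsLine inc mP mPl) (hn : IsLine inc nP nPl)
    (hmn : (mP, mPl) ≠ (nP, nPl)) :
    ((mP ∩ nP).Nonempty ↔ (mPl ∩ nPl).Nonempty) ∧
    ((mP ∩ nP).Nonempty →
      (∃ X : Point, mP ∩ nP = {X}) ∧ (∃ σ : Plane, mPl ∩ nPl = {σ})) := by
  obtain ⟨⟨A, B, hAB, hAm, hBm⟩, ⟨α, β, hab, ham, hbm⟩, km1, km2⟩ := line_key h4 hm
  obtain ⟨⟨C, D, hCD, hCn, hDn⟩, ⟨γ, δ, hgd, hgn, hdn⟩, kn1, kn2⟩ := line_key h4 hn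
  -- at most one common point
  have uniqP : ∀ X Y, X ∈ mP ∩ nP → Y ∈ mP ∩ nP → X = Y := by
    intro X Y hX hY
    by_contra hXY
    have h1 := km1 X Y hX.1 hY.1 hXY
    have h2 := kn1 X Y hX.2 hY.2 hXY
    exact hmn (Prod.ext (by rw [← h1.2, ← h2.2]) (by rw [← h1.1, ← h2.1]))
  have uniqPl : ∀ σ τ, σ ∈ mPl ∩ nPl → τ ∈ mPl ∩ nPl → σ = τ := by
    intro σ τ hσ hτ
    by_contra hστ
    have h1 := km2 σ τ hσ.1 hτ.1 hστ
    have h2 := kn2 σ τ hσ.2 hτ.2 hστ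
    exact hmn (Prod.ext (by rw [← h1.1, ← h2.1]) (by rw [← h1.2, ← h2.2]))
  have fwd : (mP ∩ nP).Nonempty → (mPl ∩ nPl).Nonempty := by
    rintro ⟨X, hXm, hXn⟩
    obtain ⟨Y, hYm, hYX⟩ : ∃ Y, Y ∈ mP ∧ Y ≠ X := by
      rcases eq_or_ne A X with rfl | hA
      · exact ⟨B, hBm, fun h => hAB (h ▸ rfl)⟩
      · exact ⟨A, hAm, hA⟩
    obtain ⟨Z, hZn, hZX⟩ : ∃ Z, Z ∈ nP ∧ Z ≠ X := by
      rcases eq_or_ne C X with rfl | hC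
      · exact ⟨D, hDn, fun h => hCD (h ▸ rfl)⟩
      · exact ⟨C, hCn, hC⟩
    have hYZ : Y ≠ Z := by
      rintro rfl
      exact hYX (uniqP Y X ⟨hYm, hZn⟩ ⟨hXm, hXn⟩)
    obtain ⟨σ, hσ⟩ := Set.nonempty_iff_ne_empty.2 (h3.1 X Y Z)
    have hσm : σ ∈ planesOf inc {X, Y} := by
      intro P hP
      apply hσ
      rcases hP with rfl | hP
      · exact Set.mem_insert _ _
      · rw [Set.mem_singleton_iff] at hP; subst hP
        exact Set.mem_insert_of_mem _ (Set.mem_insert _ _)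
    have hσn : σ ∈ planesOf inc {X, Z} := by
      intro P hP
      apply hσ
      rcases hP with rfl | hP
      · exact Set.mem_insert _ _
      · rw [Set.mem_singleton_iff] at hP; subst hP
        exact Set.mem_insert_of_mem _ (Set.mem_insert_of_mem _ rfl)
    rw [(km1 X Y hXm hYm hYX.symm).1] at hσm
    rw [(kn1 X Z hXn hZn hZX.symm).1] at hσn
    exact ⟨σ, hσm, hσn⟩
  have bwd : (mPl ∩ nPl).Nonempty → (mP ∩ nP).Nonempty := by
    rintro ⟨σ, hσm, hσn⟩
    obtain ⟨τ, hτm, hτσ⟩ : ∃ τ, τ ∈ mPl ∧ τ ≠ σ := by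
      rcases eq_or_ne α σ with rfl | ha
      · exact ⟨β, hbm, fun h => hab (h ▸ rfl)⟩
      · exact ⟨α, ham, ha⟩
    obtain ⟨ρ, hρn, hρσ⟩ : ∃ ρ, ρ ∈ nPl ∧ ρ ≠ σ := by
      rcases eq_or_ne γ σ with rfl | hg
      · exact ⟨δ, hdn, fun h => hgd (h ▸ rfl)⟩
      · exact ⟨γ, hgn, hg⟩
    have hτρ : τ ≠ ρ := by
      rintro rfl
      exact hτσ (uniqPl τ σ ⟨hτm, hρn⟩ ⟨hσm, hσn⟩)
    obtain ⟨X, hX⟩ := Set.nonempty_iff_ne_empty.2 (h3.2 σ τ ρ)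
    have hXm : X ∈ pointsOf inc {σ, τ} := by
      intro P hP
      apply hX
      rcases hP with rfl | hP
      · exact Set.mem_insert _ _
      · rw [Set.mem_singleton_iff] at hP; subst hP
        exact Set.mem_insert_of_mem _ (Set.mem_insert _ _)
    have hXn : X ∈ pointsOf inc {σ, ρ} := by
      intro P hP
      apply hX
      rcases hP with rfl | hP
      · exact Set.mem_insert _ _
      · rw [Set.mem_singleton_iff] at hP; subst hP
        exact Set.mem_insert_of_mem _ (Set.mem_insert_of_mem _ rfl)
    rw [(km2 σ τ hσm hτm hτσ.symm).1] at hXm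
    rw [(kn2 σ ρ hσn hρn hρσ.symm).1] at hXn
    exact ⟨X, hXm, hXn⟩
  refine ⟨⟨fwd, bwd⟩, fun hne => ?_⟩
  obtain ⟨X, hX⟩ := hne
  obtain ⟨σ, hσ⟩ := fwd ⟨X, hX⟩
  exact ⟨⟨X, Set.eq_singleton_iff_unique_mem.2 ⟨hX, fun Y hY => uniqP Y X hY hX⟩⟩,
    ⟨σ, Set.eq_singleton_iff_unique_mem.2 ⟨hσ, fun τ hτ => uniqPl τ σ hτ hσ⟩⟩⟩
end

section
/- If P₀P₁P₂P₃ is a complete quadrangle in a plane π (four points incident to π such that every three of them lie in exactly the one plane π), then for any choice of distinct indices the intersection {P_i,P_j}^♮♮ ∩ {P_k,P_l}^♮♮ with {i,j,k,l} = {0,1,2,3} is a singleton; i.e., the diagonal points D₁, D₂, D₃ are well-defined. -/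
variable {Point Plane : Type*}

theorem diagonal_points_well_defined (inc : Point → Plane → Prop) [Nonempty Point] [Nonempty Plane]
    (h1 : Axiom1 inc) (h2 : Axiom2 inc) (h3 : Axiom3 inc) (h4 : Axiom4 inc)
    (π : Plane) (Q : Fin 4 → Point) (hQ : CompleteQuadrangle inc π Q) :
    ∀ i j k l : Fin 4, i ≠ j → i ≠ k → i ≠ l → j ≠ k → j ≠ l → k ≠ l →
      ∃ D : Point,
        pointsOf inc (planesOf inc {Q i, Q j}) ∩
          pointsOf inc (planesOf inc {Q k, Q l}) = {D} := by
  intro i j k l hij hik hil hjk hjl hkl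
  obtain ⟨hinc, htri⟩ := hQ
  -- distinctness of the quadrangle points
  have hdist : ∀ a b : Fin 4, a ≠ b → Q a ≠ Q b := by
    intro a b hab heq
    obtain ⟨c, hca, hcb⟩ := (by decide : ∀ a b : Fin 4, ∃ c, c ≠ a ∧ c ≠ b) a b
    have h := htri a b c hab hca.symm hcb.symm
    rw [heq] at h
    have hset : ({Q b, Q b, Q c} : Set Point) = {Q b, Q c} := by simp
    rw [hset] at h
    obtain ⟨x, y, z, hx, hy, hz, hxy, hxz, hyz⟩ := h2.1 (Q b) (Q c)
    rw [h] at hx hy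
    exact hxy (hx.trans hy.symm)
  -- for each pair, a plane ≠ π through both points, realizing the line
  have key : ∀ a b : Fin 4, a ≠ b → ∃ α : Plane, α ≠ π ∧
      inc (Q a) α ∧ inc (Q b) α ∧
      pointsOf inc {π, α} = pointsOf inc (planesOf inc {Q a, Q b}) := by
    intro a b hab
    obtain ⟨x, y, z, hx, hy, hz, hxy, hxz, hyz⟩ := h2.1 (Q a) (Q b)
    have hmem : ∀ w : Plane, w ∈ planesOf inc {Q a, Q b} → inc (Q a) w ∧ inc (Q b) w := by
      intro w hw
      exact ⟨hw (Q a) (by simp), hw (Q b) (by simp)⟩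
    have main : ∀ α : Plane, α ≠ π → inc (Q a) α → inc (Q b) α →
        pointsOf inc {π, α} = pointsOf inc (planesOf inc {Q a, Q b}) := by
      intro α hαπ ha hb
      exact (h4 (Q a) (Q b) π α (hdist a b hab) (Ne.symm hαπ)
        (hinc a) ha (hinc b) hb).2
    by_cases hxπ : x = π
    · have hyπ : y ≠ π := fun h => hxy (hxπ.trans h.symm)
      obtain ⟨ha, hb⟩ := hmem y hy
      exact ⟨y, hyπ, ha, hb, main y hyπ ha hb⟩
    · obtain ⟨ha, hb⟩ := hmem x hx
      exact ⟨x, hxπ, ha, hb, main x hxπ ha hb⟩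
  obtain ⟨α, hαπ, hαi, hαj, hLij⟩ := key i j hij
  obtain ⟨γ, hγπ, hγk, hγl, hLkl⟩ := key k l hkl
  -- existence of an intersection point
  obtain ⟨D, hD⟩ := Set.nonempty_iff_ne_empty.mpr (h3.2 π α γ)
  have hDπ : inc D π := hD π (by simp)
  have hDα : inc D α := hD α (by simp)
  have hDγ : inc D γ := hD γ (by simp)
  have hDij : D ∈ pointsOf inc {π, α} := by
    intro δ hδ
    rcases hδ with h | h
    · exact h ▸ hDπ
    · simp only [Set.mem_singleton_iff] at h
      exact h ▸ hDα
  have hDkl : D ∈ pointsOf inc {π, γ} := by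
    intro δ hδ
    rcases hδ with h | h
    · exact h ▸ hDπ
    · simp only [Set.mem_singleton_iff] at h
      exact h ▸ hDγ
  refine ⟨D, ?_⟩
  rw [← hLij, ← hLkl]
  apply Set.eq_singleton_iff_unique_mem.mpr
  refine ⟨⟨hDij, hDkl⟩, ?_⟩
  rintro E ⟨hEij, hEkl⟩
  by_contra hED
  -- the two lines would coincide
  have hEπ : inc E π := hEij π (by simp)
  have hEα : inc E α := hEij α (by simp)
  have hEγ : inc E γ := hEkl γ (by simp)
  have e1 : pointsOf inc {π, α} = pointsOf inc (planesOf inc {D, E}) :=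
    (h4 D E π α (Ne.symm hED) (Ne.symm hαπ) hDπ hDα hEπ hEα).2
  have e2 : pointsOf inc {π, γ} = pointsOf inc (planesOf inc {D, E}) :=
    (h4 D E π γ (Ne.symm hED) (Ne.symm hγπ) hDπ hDγ hEπ hEγ).2
  have hlines : pointsOf inc {π, α} = pointsOf inc {π, γ} := e1.trans e2.symm
  -- then Q i, Q j, Q k are all on the line pointsOf {π, α}
  have hQiL : Q i ∈ pointsOf inc {π, α} := by
    rw [hLij]; intro δ hδ; exact hδ (Q i) (by simp)
  have hQjL : Q j ∈ pointsOf inc {π, α} := by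
    rw [hLij]; intro δ hδ; exact hδ (Q j) (by simp)
  have hQkL : Q k ∈ pointsOf inc {π, α} := by
    rw [hlines, hLkl]; intro δ hδ; exact hδ (Q k) (by simp)
  have hαmem : α ∈ planesOf inc {Q i, Q j, Q k} := by
    intro A hA
    have : A ∈ pointsOf inc {π, α} := by
      rcases hA with h | h | h
      · exact h ▸ hQiL
      · exact h ▸ hQjL
      · simp only [Set.mem_singleton_iff] at h
        exact h ▸ hQkL
    exact this α (by simp)
  rw [htri i j k hij hik hjk] at hαmem
  exact hαπ hαmem
end

section
/- With P, ω, π₀,...,π₃ and P_{ij} as in the dual complete quadrangle setup, for distinct i,j ∈ {0,1,2,3} one has {P, P_{ij}}^♮♮ = {π_i, π_j}^♮; that is, the line joining P and P_{ij} is exactly the common point-set of π_i and π_j. -/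
variable {Point Plane : Type*}

theorem claim3_join_equals_intersection (inc : Point → Plane → Prop) [Nonempty Point] [Nonempty Plane]
    (h1 : Axiom1 inc) (h2 : Axiom2 inc) (h3 : Axiom3 inc) (h4 : Axiom4 inc)
    (P : Point) (ω : Plane) (π : Fin 4 → Plane) (hPω : ¬ inc P ω)
    (hquad : ∀ i j k : Fin 4, i ≠ j → i ≠ k → j ≠ k → pointsOf inc {π i, π j, π k} = {P})
    (Pt : Fin 4 → Fin 4 → Point)
    (hPt : ∀ i j : Fin 4, i ≠ j → pointsOf inc {ω, π i, π j} = {Pt i j}) :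
    ∀ i j : Fin 4, i ≠ j →
      pointsOf inc (planesOf inc {P, Pt i j}) = pointsOf inc {π i, π j} := by
  intro i j hij
  obtain ⟨k, hki, hkj⟩ : ∃ k : Fin 4, k ≠ i ∧ k ≠ j := by
    revert hij; revert j; revert i; decide
  have hq := hquad i j k hij hki.symm hkj.symm
  have hPmem : P ∈ pointsOf inc {π i, π j, π k} := by rw [hq]; rfl
  have hPπi : inc P (π i) := hPmem (π i) (by simp)
  have hPπj : inc P (π j) := hPmem (π j) (by simp)
  have hq2 := hPt i j hij
  have hQmem : Pt i j ∈ pointsOf inc {ω, π i, π j} := by rw [hq2]; rfl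
  have hQω : inc (Pt i j) ω := hQmem ω (by simp)
  have hQπi : inc (Pt i j) (π i) := hQmem (π i) (by simp)
  have hQπj : inc (Pt i j) (π j) := hQmem (π j) (by simp)
  have hne : P ≠ Pt i j := fun h => hPω (h ▸ hQω)
  have hπij : π i ≠ π j := by
    intro h
    have hset : ({π i, π j, π k} : Set Plane) = {π i, π k} := by
      rw [← h]; ext x; simp
    have h3e := h2.2 (π i) (π k)
    rw [← hset, hq] at h3e
    obtain ⟨x, y, z, hx, hy, hz, hxy, _, _⟩ := h3e
    simp only [Set.mem_singleton_iff] at hx hy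
    exact hxy (hx.trans hy.symm)
  exact ((h4 P (Pt i j) (π i) (π j) hne hπij hPπi hPπj hQπi hQπj).2).symm
end

section
/- With P, ω, π₀,...,π₃, P_{ij} as before and diagonal planes δ_k defined by {δ_k} = {π_i,π_j}^♮♮ ∩ {π_k,π_0}^♮♮ for {i,j,k} = {1,2,3}, one has {P, P_{ij}, P_{k0}}^♮ = {δ_k}. -/
variable {Point Plane : Type*}

lemma fin4_facts (i j k : Fin 4) (h : ({i, j, k} : Set (Fin 4)) = {1, 2, 3}) :
    i ≠ j ∧ i ≠ k ∧ j ≠ k ∧ i ≠ 0 ∧ j ≠ 0 ∧ k ≠ 0 := by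
  rw [Set.ext_iff] at h
  fin_cases i <;> fin_cases j <;> fin_cases k <;> revert h <;> decide

lemma planesOf_triple (inc : Point → Plane → Prop) (A B C : Point) :
    planesOf inc {A, B, C} = planesOf inc {A, B} ∩ planesOf inc {A, C} := by
  ext σ
  simp only [planesOf, Set.mem_setOf_eq, Set.mem_inter_iff, Set.mem_insert_iff,
    Set.mem_singleton_iff]
  constructor
  · intro h
    exact ⟨fun x hx => h x (by tauto), fun x hx => h x (by tauto)⟩
  · rintro ⟨h1, h2⟩ x (rfl | rfl | rfl)
    · exact h1 x (Or.inl rfl)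
    · exact h1 x (Or.inr rfl)
    · exact h2 x (Or.inr rfl)

lemma pi_ne (inc : Point → Plane → Prop) (h2 : Axiom2 inc) (P : Point) (π : Fin 4 → Plane)
    (hquad : ∀ i j k : Fin 4, i ≠ j → i ≠ k → j ≠ k → pointsOf inc {π i, π j, π k} = {P})
    (x y z : Fin 4) (hxy : x ≠ y) (hxz : x ≠ z) (hyz : y ≠ z) : π x ≠ π y := by
  intro heq
  have h := hquad x y z hxy hxz hyz
  rw [heq, Set.insert_idem] at h
  obtain ⟨a, b, c, ha, hb, hc, hab, _, _⟩ := h2.2 (π y) (π z)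
  rw [h, Set.mem_singleton_iff] at ha hb
  exact hab (ha.trans hb.symm)

theorem claim5_diagonal_plane_common_planes (inc : Point → Plane → Prop) [Nonempty Point] [Nonempty Plane]
    (h1 : Axiom1 inc) (h2 : Axiom2 inc) (h3 : Axiom3 inc) (h4 : Axiom4 inc)
    (P : Point) (ω : Plane) (π : Fin 4 → Plane) (hPω : ¬ inc P ω)
    (hquad : ∀ i j k : Fin 4, i ≠ j → i ≠ k → j ≠ k → pointsOf inc {π i, π j, π k} = {P})
    (Pt : Fin 4 → Fin 4 → Point)
    (hPt : ∀ i j : Fin 4, i ≠ j → pointsOf inc {ω, π i, π j} = {Pt i j})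
    (δ : Fin 4 → Plane)
    (hδ : ∀ i j k : Fin 4, ({i, j, k} : Set (Fin 4)) = {1, 2, 3} →
      planesOf inc (pointsOf inc {π i, π j}) ∩ planesOf inc (pointsOf inc {π k, π 0}) = {δ k}) :
    ∀ i j k : Fin 4, ({i, j, k} : Set (Fin 4)) = {1, 2, 3} →
      planesOf inc {P, Pt i j, Pt k 0} = {δ k} := by
  intro i j k hset
  obtain ⟨hij, hik, hjk, hi0, hj0, hk0⟩ := fin4_facts i j k hset
  -- P is incident to each π
  have hP : ∀ a b c : Fin 4, a ≠ b → a ≠ c → b ≠ c → inc P (π a) := by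
    intro a b c hab hac hbc
    have h := hquad a b c hab hac hbc
    have : P ∈ pointsOf inc {π a, π b, π c} := by rw [h]; rfl
    exact this (π a) (by simp)
  have hPi : inc P (π i) := hP i j k hij hik hjk
  have hPj : inc P (π j) := hP j i k hij.symm hjk hik
  have hPk : inc P (π k) := hP k i j hik.symm hjk.symm hij
  have hP0 : inc P (π 0) := hP 0 i j (Ne.symm hi0) (Ne.symm hj0) hij
  -- Pt facts
  have hT : ∀ a b : Fin 4, a ≠ b → inc (Pt a b) ω ∧ inc (Pt a b) (π a) ∧ inc (Pt a b) (π b) := by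
    intro a b hab
    have h := hPt a b hab
    have hm : Pt a b ∈ pointsOf inc {ω, π a, π b} := by rw [h]; rfl
    exact ⟨hm ω (by simp), hm (π a) (by simp), hm (π b) (by simp)⟩
  obtain ⟨hTω, hTi, hTj⟩ := hT i j hij
  obtain ⟨hSω, hSk, hS0⟩ := hT k 0 hk0
  have hPTij : P ≠ Pt i j := fun h => hPω (h ▸ hTω)
  have hPTk0 : P ≠ Pt k 0 := fun h => hPω (h ▸ hSω)
  have hπij : π i ≠ π j := pi_ne inc h2 P π hquad i j k hij hik hjk
  have hπk0 : π k ≠ π 0 := pi_ne inc h2 P π hquad k 0 i hk0 hik.symm (Ne.symm hi0)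
  have e1 := (h4 P (Pt i j) (π i) (π j) hPTij hπij hPi hPj hTi hTj).1
  have e2 := (h4 P (Pt k 0) (π k) (π 0) hPTk0 hπk0 hPk hP0 hSk hS0).1
  rw [planesOf_triple, e1, e2, hδ i j k hset]
end

section
/- With the dual complete quadrangle setup and {i,j,k} = {1,2,3}, one has {P_{ij}, P_{k0}}^♮♮ = {ω, δ_k}^♮, where δ_k is the k-th diagonal plane. -/
variable {Point Plane : Type*}

theorem claim6_cross_join_line (inc : Point → Plane → Prop) [Nonempty Point] [Nonempty Plane]
    (h1 : Axiom1 inc) (h2 : Axiom2 inc) (h3 : Axiom3 inc) (h4 : Axiom4 inc)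
    (P : Point) (ω : Plane) (π : Fin 4 → Plane) (hPω : ¬ inc P ω)
    (hquad : ∀ i j k : Fin 4, i ≠ j → i ≠ k → j ≠ k → pointsOf inc {π i, π j, π k} = {P})
    (Pt : Fin 4 → Fin 4 → Point)
    (hPt : ∀ i j : Fin 4, i ≠ j → pointsOf inc {ω, π i, π j} = {Pt i j})
    (δ : Fin 4 → Plane)
    (hδ : ∀ i j k : Fin 4, ({i, j, k} : Set (Fin 4)) = {1, 2, 3} →
      planesOf inc (pointsOf inc {π i, π j}) ∩ planesOf inc (pointsOf inc {π k, π 0}) = {δ k}) :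
    ∀ i j k : Fin 4, ({i, j, k} : Set (Fin 4)) = {1, 2, 3} →
      pointsOf inc (planesOf inc {Pt i j, Pt k 0}) = pointsOf inc {ω, δ k} := by
  intro i j k hset
  -- extract index facts
  have hmem : ∀ x : Fin 4, (x = i ∨ x = j ∨ x = k) ↔ (x = 1 ∨ x = 2 ∨ x = 3) := by
    intro x
    have := Set.ext_iff.mp hset x
    simpa [eq_comm] using this
  have hi := (hmem i).mp (Or.inl rfl)
  have hj := (hmem j).mp (Or.inr (Or.inl rfl))
  have hk := (hmem k).mp (Or.inr (Or.inr rfl))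
  have h1' := (hmem 1).mpr (Or.inl rfl)
  have h2' := (hmem 2).mpr (Or.inr (Or.inl rfl))
  have h3' := (hmem 3).mpr (Or.inr (Or.inr rfl))
  have hiv : i.1 = 1 ∨ i.1 = 2 ∨ i.1 = 3 := by rcases hi with rfl|rfl|rfl <;> decide
  have hjv : j.1 = 1 ∨ j.1 = 2 ∨ j.1 = 3 := by rcases hj with rfl|rfl|rfl <;> decide
  have hkv : k.1 = 1 ∨ k.1 = 2 ∨ k.1 = 3 := by rcases hk with rfl|rfl|rfl <;> decide
  have h1v : i.1 = 1 ∨ j.1 = 1 ∨ k.1 = 1 := by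
    rcases h1' with h|h|h
    · exact Or.inl (by rw [← h]; rfl)
    · exact Or.inr (Or.inl (by rw [← h]; rfl))
    · exact Or.inr (Or.inr (by rw [← h]; rfl))
  have h2v : i.1 = 2 ∨ j.1 = 2 ∨ k.1 = 2 := by
    rcases h2' with h|h|h
    · exact Or.inl (by rw [← h]; rfl)
    · exact Or.inr (Or.inl (by rw [← h]; rfl))
    · exact Or.inr (Or.inr (by rw [← h]; rfl))
  have h3v : i.1 = 3 ∨ j.1 = 3 ∨ k.1 = 3 := by
    rcases h3' with h|h|h
    · exact Or.inl (by rw [← h]; rfl)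
    · exact Or.inr (Or.inl (by rw [← h]; rfl))
    · exact Or.inr (Or.inr (by rw [← h]; rfl))
  have hij : i ≠ j := by intro h; rw [Fin.ext_iff] at h; omega
  have hik : i ≠ k := by intro h; rw [Fin.ext_iff] at h; omega
  have hjk : j ≠ k := by intro h; rw [Fin.ext_iff] at h; omega
  have hk0 : k ≠ 0 := by intro h; rw [Fin.ext_iff] at h; simp at h; omega
  set A := Pt i j with hA
  set B := Pt k 0 with hB
  have hAmem : A ∈ pointsOf inc {ω, π i, π j} := by rw [hPt i j hij]; exact rfl
  have hBmem : B ∈ pointsOf inc {ω, π k, π 0} := by rw [hPt k 0 hk0]; exact rfl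
  have hAω : inc A ω := hAmem ω (by simp)
  have hAi : inc A (π i) := hAmem (π i) (by simp)
  have hAj : inc A (π j) := hAmem (π j) (by simp)
  have hBω : inc B ω := hBmem ω (by simp)
  have hBk : inc B (π k) := hBmem (π k) (by simp)
  have hB0 : inc B (π 0) := hBmem (π 0) (by simp)
  have hδk := hδ i j k hset
  have hδmem : δ k ∈ planesOf inc (pointsOf inc {π i, π j}) ∩
      planesOf inc (pointsOf inc {π k, π 0}) := by rw [hδk]; exact rfl
  have hApts : A ∈ pointsOf inc {π i, π j} := by
    intro p hp; rcases hp with rfl|rfl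
    · exact hAi
    · exact hAj
  have hBpts : B ∈ pointsOf inc {π k, π 0} := by
    intro p hp; rcases hp with rfl|rfl
    · exact hBk
    · exact hB0
  have hAδ : inc A (δ k) := hδmem.1 A hApts
  have hBδ : inc B (δ k) := hδmem.2 B hBpts
  have hPmem : P ∈ pointsOf inc {π i, π j, π k} := by
    rw [hquad i j k hij hik hjk]; exact rfl
  have hPi : inc P (π i) := hPmem (π i) (by simp)
  have hPj : inc P (π j) := hPmem (π j) (by simp)
  have hAB : A ≠ B := by
    intro h
    have hAk : inc A (π k) := h ▸ hBk
    have : A ∈ pointsOf inc {π i, π j, π k} := by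
      intro p hp; rcases hp with rfl|rfl|rfl
      · exact hAi
      · exact hAj
      · exact hAk
    rw [hquad i j k hij hik hjk] at this
    exact hPω (this ▸ hAω)
  have hωδ : ω ≠ δ k := by
    intro h
    have : P ∈ pointsOf inc {π i, π j} := by
      intro p hp; rcases hp with rfl|rfl
      · exact hPi
      · exact hPj
    exact hPω (h ▸ hδmem.1 P this)
  exact ((h4 A B ω (δ k) hAB hωδ hAω hAδ hBω hBδ).2).symm
end

section
/- With the dual complete quadrangle setup and {i,j,k} = {1,2,3}, the intersection {P_{0i}, P_{jk}}^♮♮ ∩ {P_{0j}, P_{ki}}^♮♮ is a singleton {D_{ij}}. -/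
variable {Point Plane : Type*}

section Aux

variable (inc : Point → Plane → Prop)

lemma mem_pointsOf' {T : Set Plane} {A : Point} :
    A ∈ pointsOf inc T ↔ ∀ π ∈ T, inc A π := Iff.rfl

lemma mem_planesOf' {S : Set Point} {π : Plane} :
    π ∈ planesOf inc S ↔ ∀ A ∈ S, inc A π := Iff.rfl

lemma mem_pointsOf_pair {A : Point} {α β : Plane} (h1 : inc A α) (h2 : inc A β) :
    A ∈ pointsOf inc {α, β} := by
  intro π' hπ'
  rcases hπ' with rfl | hπ'
  · exact h1
  · rcases hπ' with rfl; exact h2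

lemma mem_planesOf_pair {A B : Point} {α : Plane} (h1 : inc A α) (h2 : inc B α) :
    α ∈ planesOf inc {A, B} := by
  intro X hX
  rcases hX with rfl | hX
  · exact h1
  · rcases hX with rfl; exact h2

lemma unique_line (h4 : Axiom4 inc) {A B : Point} {α β : Plane}
    (hAB : A ≠ B) (hαβ : α ≠ β)
    (hA : A ∈ pointsOf inc {α, β}) (hB : B ∈ pointsOf inc {α, β}) :
    planesOf inc {A, B} = planesOf inc (pointsOf inc {α, β}) ∧
    pointsOf inc {α, β} = pointsOf inc (planesOf inc {A, B}) := by
  exact h4 A B α β hAB hαβ (hA α (by simp)) (hA β (by simp)) (hB α (by simp)) (hB β (by simp))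

end Aux

theorem claim7_diagonal_point_well_defined (inc : Point → Plane → Prop) [Nonempty Point] [Nonempty Plane]
    (h1 : Axiom1 inc) (h2 : Axiom2 inc) (h3 : Axiom3 inc) (h4 : Axiom4 inc)
    (P : Point) (ω : Plane) (π : Fin 4 → Plane) (hPω : ¬ inc P ω)
    (hquad : ∀ i j k : Fin 4, i ≠ j → i ≠ k → j ≠ k → pointsOf inc {π i, π j, π k} = {P})
    (Pt : Fin 4 → Fin 4 → Point)
    (hPt : ∀ i j : Fin 4, i ≠ j → pointsOf inc {ω, π i, π j} = {Pt i j}) :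
    ∀ i j k : Fin 4, ({i, j, k} : Set (Fin 4)) = {1, 2, 3} →
      ∃ D : Point,
        pointsOf inc (planesOf inc {Pt 0 i, Pt j k}) ∩
          pointsOf inc (planesOf inc {Pt 0 j, Pt k i}) = {D} := by
  intro i j k hijk
  -- index facts
  have hmem : ∀ x : Fin 4, (x = i ∨ x = j ∨ x = k) ↔ (x = 1 ∨ x = 2 ∨ x = 3) := by
    intro x
    have := Set.ext_iff.mp hijk x
    simpa [Set.mem_insert_iff, Set.mem_singleton_iff] using this
  obtain ⟨hi0, hj0, hk0, hij, hik, hjk⟩ :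
      i ≠ 0 ∧ j ≠ 0 ∧ k ≠ 0 ∧ i ≠ j ∧ i ≠ k ∧ j ≠ k := by
    have key : ∀ a b c : Fin 4, ((1 : Fin 4) = a ∨ 1 = b ∨ 1 = c) →
        ((2 : Fin 4) = a ∨ 2 = b ∨ 2 = c) → ((3 : Fin 4) = a ∨ 3 = b ∨ 3 = c) →
        (a ≠ 0 ∧ b ≠ 0 ∧ c ≠ 0 ∧ a ≠ b ∧ a ≠ c ∧ b ≠ c) := by decide
    exact key i j k ((hmem 1).mpr (Or.inl rfl)) ((hmem 2).mpr (Or.inr (Or.inl rfl)))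
      ((hmem 3).mpr (Or.inr (Or.inr rfl)))
  -- P is incident to every plane π a
  have hPπ : ∀ a : Fin 4, inc P (π a) := by
    intro a
    have habc : ∀ a : Fin 4, ∃ b c : Fin 4, a ≠ b ∧ a ≠ c ∧ b ≠ c := by decide
    obtain ⟨b, c, hab, hac, hbc⟩ := habc a
    have h := hquad a b c hab hac hbc
    have hP : P ∈ pointsOf inc {π a, π b, π c} := by rw [h]; rfl
    exact hP (π a) (by simp)
  have hωπ : ∀ a : Fin 4, ω ≠ π a := by
    intro a h
    exact hPω (h ▸ hPπ a)
  -- incidences of the points Pt a b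
  have hPtmem : ∀ a b : Fin 4, a ≠ b → Pt a b ∈ pointsOf inc {ω, π a, π b} := by
    intro a b hab
    rw [hPt a b hab]; rfl
  have hPtω : ∀ a b : Fin 4, a ≠ b → inc (Pt a b) ω :=
    fun a b hab => hPtmem a b hab ω (by simp)
  have hPta : ∀ a b : Fin 4, a ≠ b → inc (Pt a b) (π a) :=
    fun a b hab => hPtmem a b hab (π a) (by simp)
  have hPtb : ∀ a b : Fin 4, a ≠ b → inc (Pt a b) (π b) :=
    fun a b hab => hPtmem a b hab (π b) (by simp)
  -- no point incident to ω and three distinct planes of the quadrangle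
  have hP3 : ∀ (X : Point) (a b c : Fin 4), a ≠ b → a ≠ c → b ≠ c →
      inc X (π a) → inc X (π b) → inc X (π c) → inc X ω → False := by
    intro X a b c hab hac hbc ha hb hc hw
    have hX : X ∈ pointsOf inc {π a, π b, π c} := by
      intro π' hπ'
      rcases hπ' with rfl | hπ'
      · exact ha
      · rcases hπ' with rfl | hπ'
        · exact hb
        · rcases hπ' with rfl; exact hc
    rw [hquad a b c hab hac hbc] at hX
    rcases hX with rfl
    exact hPω hw
  have h0i : (0 : Fin 4) ≠ i := hi0.symm
  have h0j : (0 : Fin 4) ≠ j := hj0.symm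
  have h0k : (0 : Fin 4) ≠ k := hk0.symm
  have hki : k ≠ i := hik.symm
  -- distinctness of the four points
  have hAB : Pt 0 i ≠ Pt j k := by
    intro h
    exact hP3 (Pt 0 i) i j k hij hik hjk (hPtb 0 i h0i)
      (by rw [h]; exact hPta j k hjk) (by rw [h]; exact hPtb j k hjk) (hPtω 0 i h0i)
  have hCE : Pt 0 j ≠ Pt k i := by
    intro h
    exact hP3 (Pt 0 j) j k i hjk hij.symm hki (hPtb 0 j h0j)
      (by rw [h]; exact hPta k i hki) (by rw [h]; exact hPtb k i hki) (hPtω 0 j h0j)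
  have hAC : Pt 0 i ≠ Pt 0 j := by
    intro h
    exact hP3 (Pt 0 i) 0 i j h0i h0j hij (hPta 0 i h0i) (hPtb 0 i h0i)
      (by rw [h]; exact hPtb 0 j h0j) (hPtω 0 i h0i)
  have hBE : Pt j k ≠ Pt k i := by
    intro h
    exact hP3 (Pt j k) j k i hjk hij.symm hki (hPta j k hjk) (hPtb j k hjk)
      (by rw [h]; exact hPtb k i hki) (hPtω j k hjk)
  -- Key claim: any plane incident to all four points is ω
  have hF : ∀ α : Plane, inc (Pt 0 i) α → inc (Pt j k) α → inc (Pt 0 j) α →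
      inc (Pt k i) α → α = ω := by
    intro α hA hB hC hE
    by_contra hne
    have hωα : ω ≠ α := fun h => hne h.symm
    -- the line through Pt 0 i, Pt 0 j
    have e1 := (unique_line inc h4 hAC hωα
      (mem_pointsOf_pair inc (hPtω 0 i h0i) hA)
      (mem_pointsOf_pair inc (hPtω 0 j h0j) hC)).2
    have e2 := (unique_line inc h4 hAC (hωπ 0)
      (mem_pointsOf_pair inc (hPtω 0 i h0i) (hPta 0 i h0i))
      (mem_pointsOf_pair inc (hPtω 0 j h0j) (hPta 0 j h0j))).2
    -- the line through Pt j k, Pt k i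
    have e3 := (unique_line inc h4 hBE hωα
      (mem_pointsOf_pair inc (hPtω j k hjk) hB)
      (mem_pointsOf_pair inc (hPtω k i hki) hE)).2
    have e4 := (unique_line inc h4 hBE (hωπ k)
      (mem_pointsOf_pair inc (hPtω j k hjk) (hPtb j k hjk))
      (mem_pointsOf_pair inc (hPtω k i hki) (hPta k i hki))).2
    have e : pointsOf inc {ω, π 0} = pointsOf inc {ω, π k} := by
      rw [e2, ← e1, e3, ← e4]
    have hmemA : Pt 0 i ∈ pointsOf inc {ω, π k} := by
      rw [← e]
      exact mem_pointsOf_pair inc (hPtω 0 i h0i) (hPta 0 i h0i)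
    have hAk : inc (Pt 0 i) (π k) := hmemA (π k) (by simp)
    exact hP3 (Pt 0 i) 0 i k h0i h0k hik (hPta 0 i h0i) (hPtb 0 i h0i) hAk (hPtω 0 i h0i)
  -- pick planes ≠ ω through each pair
  have hAe : ∀ X Y : Point, ∃ γ, γ ∈ planesOf inc {X, Y} ∧ γ ≠ ω := by
    intro X Y
    obtain ⟨x, y, z, hx, hy, hz, hxy, hxz, hyz⟩ := h2.1 X Y
    by_cases hxω : x = ω
    · exact ⟨y, hy, by rw [← hxω]; exact fun h => hxy h.symm⟩
    · exact ⟨x, hx, hxω⟩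
  obtain ⟨γ1, hγ1mem, hγ1ne⟩ := hAe (Pt 0 i) (Pt j k)
  obtain ⟨γ2, hγ2mem, hγ2ne⟩ := hAe (Pt 0 j) (Pt k i)
  have hγ1A : inc (Pt 0 i) γ1 := hγ1mem (Pt 0 i) (by simp)
  have hγ1B : inc (Pt j k) γ1 := hγ1mem (Pt j k) (by simp)
  have hγ2C : inc (Pt 0 j) γ2 := hγ2mem (Pt 0 j) (by simp)
  have hγ2E : inc (Pt k i) γ2 := hγ2mem (Pt k i) (by simp)
  -- the two lines in terms of {ω, γ}
  have L1 := unique_line inc h4 hAB (fun h : ω = γ1 => hγ1ne h.symm)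
    (mem_pointsOf_pair inc (hPtω 0 i h0i) hγ1A)
    (mem_pointsOf_pair inc (hPtω j k hjk) hγ1B)
  have L2 := unique_line inc h4 hCE (fun h : ω = γ2 => hγ2ne h.symm)
    (mem_pointsOf_pair inc (hPtω 0 j h0j) hγ2C)
    (mem_pointsOf_pair inc (hPtω k i hki) hγ2E)
  -- existence of a common point via Axiom 3
  obtain ⟨D, hD⟩ := Set.nonempty_iff_ne_empty.mpr (h3.2 ω γ1 γ2)
  have hDω : inc D ω := hD ω (by simp)
  have hDγ1 : inc D γ1 := hD γ1 (by simp)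
  have hDγ2 : inc D γ2 := hD γ2 (by simp)
  have hD1 : D ∈ pointsOf inc (planesOf inc {Pt 0 i, Pt j k}) := by
    rw [← L1.2]; exact mem_pointsOf_pair inc hDω hDγ1
  have hD2 : D ∈ pointsOf inc (planesOf inc {Pt 0 j, Pt k i}) := by
    rw [← L2.2]; exact mem_pointsOf_pair inc hDω hDγ2
  refine ⟨D, ?_⟩
  apply Set.eq_singleton_iff_unique_mem.mpr
  refine ⟨⟨hD1, hD2⟩, ?_⟩
  rintro X ⟨hX1, hX2⟩
  by_contra hXD
  -- X and D are two distinct points on both lines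
  have hDX : D ≠ X := fun h => hXD h.symm
  have hX1' : X ∈ pointsOf inc {ω, γ1} := by rw [L1.2]; exact hX1
  have hX2' : X ∈ pointsOf inc {ω, γ2} := by rw [L2.2]; exact hX2
  have hD1' : D ∈ pointsOf inc {ω, γ1} := mem_pointsOf_pair inc hDω hDγ1
  have hD2' : D ∈ pointsOf inc {ω, γ2} := mem_pointsOf_pair inc hDω hDγ2
  have M1 := (unique_line inc h4 hDX (fun h : ω = γ1 => hγ1ne h.symm) hD1' hX1').1
  have M2 := (unique_line inc h4 hDX (fun h : ω = γ2 => hγ2ne h.symm) hD2' hX2').1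
  -- hence the two pair-plane-sets coincide
  have hplanes : planesOf inc {Pt 0 i, Pt j k} = planesOf inc {Pt 0 j, Pt k i} := by
    rw [L1.1, ← M1, M2, ← L2.1]
  -- but every plane in the common plane set equals ω — contradicting Axiom 2
  obtain ⟨x, y, z, hx, hy, hz, hxy, hxz, hyz⟩ := h2.1 (Pt 0 i) (Pt j k)
  have hxω : x = ω := by
    have hx2 : x ∈ planesOf inc {Pt 0 j, Pt k i} := hplanes ▸ hx
    exact hF x (hx (Pt 0 i) (by simp)) (hx (Pt j k) (by simp))
      (hx2 (Pt 0 j) (by simp)) (hx2 (Pt k i) (by simp))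
  have hyω : y = ω := by
    have hy2 : y ∈ planesOf inc {Pt 0 j, Pt k i} := hplanes ▸ hy
    exact hF y (hy (Pt 0 i) (by simp)) (hy (Pt j k) (by simp))
      (hy2 (Pt 0 j) (by simp)) (hy2 (Pt k i) (by simp))
  exact hxy (hxω.trans hyω.symm)
end

section
/- With the dual complete quadrangle setup, the four points P_{01}, P_{02}, P_{23}, P_{31} form a complete quadrangle in the plane ω; that is, every three of these points have {·,·,·}^♮ a singleton (equal to {ω}). -/
variable {Point Plane : Type*}

theorem claim8_traces_form_complete_quadrangle (inc : Point → Plane → Prop) [Nonempty Point] [Nonempty Plane]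
    (h1 : Axiom1 inc) (h2 : Axiom2 inc) (h3 : Axiom3 inc) (h4 : Axiom4 inc)
    (P : Point) (ω : Plane) (π : Fin 4 → Plane) (hPω : ¬ inc P ω)
    (hquad : ∀ i j k : Fin 4, i ≠ j → i ≠ k → j ≠ k → pointsOf inc {π i, π j, π k} = {P})
    (Pt : Fin 4 → Fin 4 → Point)
    (hPt : ∀ i j : Fin 4, i ≠ j → pointsOf inc {ω, π i, π j} = {Pt i j}) :
    CompleteQuadrangle inc ω ![Pt 0 1, Pt 0 2, Pt 2 3, Pt 3 1] := by
  have hmemPt : ∀ i j : Fin 4, i ≠ j → Pt i j ∈ pointsOf inc {ω, π i, π j} := by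
    intro i j hij; rw [hPt i j hij]; rfl
  have hω : ∀ i j : Fin 4, i ≠ j → inc (Pt i j) ω := fun i j h => hmemPt i j h ω (by simp)
  have hπ1 : ∀ i j : Fin 4, i ≠ j → inc (Pt i j) (π i) := fun i j h => hmemPt i j h (π i) (by simp)
  have hπ2 : ∀ i j : Fin 4, i ≠ j → inc (Pt i j) (π j) := fun i j h => hmemPt i j h (π j) (by simp)
  have hPeq : ∀ (X : Point) (a b c : Fin 4), a ≠ b → a ≠ c → b ≠ c →
      inc X (π a) → inc X (π b) → inc X (π c) → X = P := by
    intro X a b c hab hac hbc ha hb hc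
    have hX : X ∈ pointsOf inc {π a, π b, π c} := by
      intro τ hτ
      simp only [Set.mem_insert_iff, Set.mem_singleton_iff] at hτ
      rcases hτ with rfl | rfl | rfl <;> assumption
    rw [hquad a b c hab hac hbc] at hX
    exact hX
  have key : ∀ (X Y Z : Point) (a d e : Fin 4), a ≠ d → a ≠ e → d ≠ e →
      X ≠ Y → inc X ω → inc Y ω → inc X (π a) → inc Y (π a) →
      inc Z ω → inc Z (π d) → inc Z (π e) →
      ∀ σ, inc X σ → inc Y σ → inc Z σ → σ = ω := by
    intro X Y Z a d e had hae hde hXY hXω hYω hXa hYa hZω hZd hZe σ hXσ hYσ hZσ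
    by_contra hσ
    obtain ⟨-, h4'⟩ := h4 X Y ω σ hXY (fun h => hσ h.symm) hXω hXσ hYω hYσ
    have hZmem : Z ∈ pointsOf inc {ω, σ} := by
      intro τ hτ
      simp only [Set.mem_insert_iff, Set.mem_singleton_iff] at hτ
      rcases hτ with rfl | rfl <;> assumption
    rw [h4'] at hZmem
    have hZa : inc Z (π a) := hZmem (π a) (by
      intro A hA
      simp only [Set.mem_insert_iff, Set.mem_singleton_iff] at hA
      rcases hA with rfl | rfl <;> assumption)
    have hZP := hPeq Z a d e had hae hde hZa hZd hZe
    exact hPω (hZP ▸ hZω)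
  have ne1 : Pt 0 1 ≠ Pt 0 2 := by
    intro h
    have hp := hPeq (Pt 0 1) 0 1 2 (by decide) (by decide) (by decide)
      (hπ1 0 1 (by decide)) (hπ2 0 1 (by decide)) (by rw [h]; exact hπ2 0 2 (by decide))
    exact hPω (hp ▸ hω 0 1 (by decide))
  have ne2 : Pt 0 1 ≠ Pt 3 1 := by
    intro h
    have hp := hPeq (Pt 0 1) 0 1 3 (by decide) (by decide) (by decide)
      (hπ1 0 1 (by decide)) (hπ2 0 1 (by decide)) (by rw [h]; exact hπ1 3 1 (by decide))
    exact hPω (hp ▸ hω 0 1 (by decide))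
  have ne3 : Pt 0 2 ≠ Pt 2 3 := by
    intro h
    have hp := hPeq (Pt 0 2) 0 2 3 (by decide) (by decide) (by decide)
      (hπ1 0 2 (by decide)) (hπ2 0 2 (by decide)) (by rw [h]; exact hπ2 2 3 (by decide))
    exact hPω (hp ▸ hω 0 2 (by decide))
  have ne4 : Pt 2 3 ≠ Pt 3 1 := by
    intro h
    have hp := hPeq (Pt 2 3) 1 2 3 (by decide) (by decide) (by decide)
      (by rw [h]; exact hπ2 3 1 (by decide)) (hπ1 2 3 (by decide)) (hπ2 2 3 (by decide))
    exact hPω (hp ▸ hω 2 3 (by decide))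
  have k1 : ∀ σ, inc (Pt 0 1) σ → inc (Pt 0 2) σ → inc (Pt 2 3) σ → σ = ω :=
    key (Pt 0 1) (Pt 0 2) (Pt 2 3) 0 2 3 (by decide) (by decide) (by decide) ne1
      (hω 0 1 (by decide)) (hω 0 2 (by decide)) (hπ1 0 1 (by decide)) (hπ1 0 2 (by decide))
      (hω 2 3 (by decide)) (hπ1 2 3 (by decide)) (hπ2 2 3 (by decide))
  have k2 : ∀ σ, inc (Pt 0 1) σ → inc (Pt 0 2) σ → inc (Pt 3 1) σ → σ = ω :=
    key (Pt 0 1) (Pt 0 2) (Pt 3 1) 0 3 1 (by decide) (by decide) (by decide) ne1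
      (hω 0 1 (by decide)) (hω 0 2 (by decide)) (hπ1 0 1 (by decide)) (hπ1 0 2 (by decide))
      (hω 3 1 (by decide)) (hπ1 3 1 (by decide)) (hπ2 3 1 (by decide))
  have k3 : ∀ σ, inc (Pt 0 1) σ → inc (Pt 3 1) σ → inc (Pt 2 3) σ → σ = ω :=
    key (Pt 0 1) (Pt 3 1) (Pt 2 3) 1 2 3 (by decide) (by decide) (by decide) ne2
      (hω 0 1 (by decide)) (hω 3 1 (by decide)) (hπ2 0 1 (by decide)) (hπ2 3 1 (by decide))
      (hω 2 3 (by decide)) (hπ1 2 3 (by decide)) (hπ2 2 3 (by decide))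
  have k4 : ∀ σ, inc (Pt 0 2) σ → inc (Pt 2 3) σ → inc (Pt 3 1) σ → σ = ω :=
    key (Pt 0 2) (Pt 2 3) (Pt 3 1) 2 3 1 (by decide) (by decide) (by decide) ne3
      (hω 0 2 (by decide)) (hω 2 3 (by decide)) (hπ2 0 2 (by decide)) (hπ1 2 3 (by decide))
      (hω 3 1 (by decide)) (hπ1 3 1 (by decide)) (hπ2 3 1 (by decide))
  have final : ∀ (X Y Z : Point), inc X ω → inc Y ω → inc Z ω →
      (∀ σ, inc X σ → inc Y σ → inc Z σ → σ = ω) → planesOf inc {X, Y, Z} = {ω} := by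
    intro X Y Z hX hY hZ h
    ext σ
    simp only [planesOf, Set.mem_setOf_eq, Set.mem_singleton_iff]
    constructor
    · intro hm
      exact h σ (hm X (by simp)) (hm Y (by simp)) (hm Z (by simp))
    · rintro rfl A hA
      simp only [Set.mem_insert_iff, Set.mem_singleton_iff] at hA
      rcases hA with rfl | rfl | rfl <;> assumption
  constructor
  · intro i
    fin_cases i <;>
      simp only [Matrix.cons_val_zero, Matrix.cons_val_one, Matrix.head_cons,
        Matrix.cons_val_two, Matrix.tail_cons, Matrix.cons_val_three, Matrix.head_fin_const,
        Fin.isValue, Matrix.cons_val_fin_one] <;>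
      first
        | exact hω 0 1 (by decide)
        | exact hω 0 2 (by decide)
        | exact hω 2 3 (by decide)
        | exact hω 3 1 (by decide)
  · intro i j k hij hik hjk
    fin_cases i <;> fin_cases j <;> fin_cases k <;>
      first
        | exact absurd rfl hij
        | exact absurd rfl hik
        | exact absurd rfl hjk
        | (simp only [Matrix.cons_val_zero, Matrix.cons_val_one, Matrix.head_cons,
            Matrix.cons_val_two, Matrix.tail_cons, Matrix.cons_val_three, Matrix.head_fin_const,
            Fin.isValue, Matrix.cons_val_fin_one]
           refine final _ _ _ ?_ ?_ ?_ ?_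
           · first
              | exact hω 0 1 (by decide) | exact hω 0 2 (by decide)
              | exact hω 2 3 (by decide) | exact hω 3 1 (by decide)
           · first
              | exact hω 0 1 (by decide) | exact hω 0 2 (by decide)
              | exact hω 2 3 (by decide) | exact hω 3 1 (by decide)
           · first
              | exact hω 0 1 (by decide) | exact hω 0 2 (by decide)
              | exact hω 2 3 (by decide) | exact hω 3 1 (by decide)
           · intro σ ha hb hc
             first
              | exact k1 σ ha hb hc | exact k1 σ ha hc hb | exact k1 σ hb ha hc
              | exact k1 σ hb hc ha | exact k1 σ hc ha hb | exact k1 σ hc hb ha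
              | exact k2 σ ha hb hc | exact k2 σ ha hc hb | exact k2 σ hb ha hc
              | exact k2 σ hb hc ha | exact k2 σ hc ha hb | exact k2 σ hc hb ha
              | exact k3 σ ha hb hc | exact k3 σ ha hc hb | exact k3 σ hb ha hc
              | exact k3 σ hb hc ha | exact k3 σ hc ha hb | exact k3 σ hc hb ha
              | exact k4 σ ha hb hc | exact k4 σ ha hc hb | exact k4 σ hb ha hc
              | exact k4 σ hb hc ha | exact k4 σ hc ha hb | exact k4 σ hc hb ha)
end

section
/- Let π be a plane and π₁, π₂ two distinct planes on an incident line-pair (ℓ₁, ℓ₂) with common point O (so O ∈ {π₁,π₂}^♮), where O ∉ π^♮. Then {π, π₁, π₂}^♮ is a singleton. -/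
variable {Point Plane : Type*}

theorem section_of_two_pencil_planes_is_singleton (inc : Point → Plane → Prop) [Nonempty Point] [Nonempty Plane]
    (h1 : Axiom1 inc) (h2 : Axiom2 inc) (h3 : Axiom3 inc) (h4 : Axiom4 inc)
    (l1P l2P : Set Point) (l1Pl l2Pl : Set Plane)
    (hl1 : IsLine inc l1P l1Pl) (hl2 : IsLine inc l2P l2Pl)
    (hne : (l1P, l1Pl) ≠ (l2P, l2Pl))
    (O : Point) (hO1 : O ∈ l1P) (hO2 : O ∈ l2P)
    (π π1 π2 : Plane) (hπ1 : π1 ∈ l1Pl) (hπ2 : π2 ∈ l2Pl) (h12 : π1 ≠ π2)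
    (hOπ : ¬ inc O π) :
    ∃ Q : Point, pointsOf inc {π, π1, π2} = {Q} := by
  -- Every point of a line is incident to every plane of the line.
  have key : ∀ (lP : Set Point) (lPl : Set Plane), IsLine inc lP lPl →
      ∀ X ∈ lP, ∀ γ ∈ lPl, inc X γ := by
    rintro lP lPl ⟨A, B, α, β, hAB, hab, hAα, hAβ, hBα, hBβ, rfl, rfl⟩ X hX γ hγ
    have := (h4 A B α β hAB hab hAα hAβ hBα hBβ).2
    rw [this] at hX
    exact hX γ hγ
  have hOπ1 : inc O π1 := key l1P l1Pl hl1 O hO1 π1 hπ1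
  have hOπ2 : inc O π2 := key l2P l2Pl hl2 O hO2 π2 hπ2
  -- Existence
  obtain ⟨Q, hQ⟩ := Set.nonempty_iff_ne_empty.2 (h3.2 π π1 π2)
  refine ⟨Q, ?_⟩
  apply Set.eq_singleton_iff_unique_mem.2 ⟨hQ, ?_⟩
  intro Q' hQ'
  by_contra hQQ
  have hQπ : inc Q π := hQ π (by simp [Set.mem_insert_iff])
  have hQπ1 : inc Q π1 := hQ π1 (by simp [Set.mem_insert_iff])
  have hQπ2 : inc Q π2 := hQ π2 (by simp [Set.mem_insert_iff])
  have hQ'π : inc Q' π := hQ' π (by simp [Set.mem_insert_iff])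
  have hQ'π1 : inc Q' π1 := hQ' π1 (by simp [Set.mem_insert_iff])
  have hQ'π2 : inc Q' π2 := hQ' π2 (by simp [Set.mem_insert_iff])
  have h := (h4 Q' Q π1 π2 hQQ h12 hQ'π1 hQ'π2 hQπ1 hQπ2).2
  have hO : O ∈ pointsOf inc {π1, π2} := by
    intro γ hγ
    rcases hγ with rfl | hγ
    · exact hOπ1
    · simp only [Set.mem_singleton_iff] at hγ; subst hγ; exact hOπ2
  rw [h] at hO
  exact hOπ (hO π (by intro X hX; rcases hX with rfl | hX
                      · exact hQ'π
                      · simp only [Set.mem_singleton_iff] at hX; subst hX; exact hQπ))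
end

section
/- The Pappus projectivity axiom implies its spatial dual: if the cross-joins of any simple hexagon alternately inscribed in an incident line-pair are collinear points, then dually, for any incident line-pair (ℓ₁, ℓ₂) with common point O and common plane ω, and planes α₁,β₁,γ₁ ∈ (ℓ₁)_Π, α₂,β₂,γ₂ ∈ (ℓ₂)_Π all distinct from ω and from each other, the cross-join planes α₀ = (β₁γ₂)□(β₂γ₁), β₀ = (γ₁α₂)□(γ₂α₁), γ₀ = (α₁β₂)□(α₂β₁) are collinear. -/
variable {Point Plane : Type*}

/-- AXIOM [P] (Pappus): the cross-joins of a simple hexagon alternately inscribed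
in an incident line-pair are collinear. -/
def AxiomP (inc : Point → Plane → Prop) : Prop :=
  ∀ (l1P l2P : Set Point) (l1Pl l2Pl : Set Plane) (O A1 B1 C1 A2 B2 C2 : Point),
    IsLine inc l1P l1Pl → IsLine inc l2P l2Pl → (l1P, l1Pl) ≠ (l2P, l2Pl) →
    O ∈ l1P → O ∈ l2P →
    A1 ∈ l1P → B1 ∈ l1P → C1 ∈ l1P → A2 ∈ l2P → B2 ∈ l2P → C2 ∈ l2P →
    List.Pairwise (· ≠ ·) [O, A1, B1, C1, A2, B2, C2] →
    ∀ X Y Z : Point,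
      pointsOf inc (planesOf inc {B1, C2}) ∩ pointsOf inc (planesOf inc {B2, C1}) = {X} →
      pointsOf inc (planesOf inc {C1, A2}) ∩ pointsOf inc (planesOf inc {C2, A1}) = {Y} →
      pointsOf inc (planesOf inc {A1, B2}) ∩ pointsOf inc (planesOf inc {A2, B1}) = {Z} →
      CollinearPoints inc {X, Y, Z}

section Lemmas

variable {inc : Point → Plane → Prop}

lemma mem_po_pairL {A : Point} {σ τ : Plane} (h : A ∈ pointsOf inc {σ, τ}) : inc A σ :=
  h σ (Set.mem_insert _ _)

lemma mem_po_pairR {A : Point} {σ τ : Plane} (h : A ∈ pointsOf inc {σ, τ}) : inc A τ :=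
  h τ (Set.mem_insert_of_mem _ rfl)

lemma mk_po_pair {A : Point} {σ τ : Plane} (h1 : inc A σ) (h2 : inc A τ) :
    A ∈ pointsOf inc {σ, τ} := by
  intro ρ hρ
  rcases hρ with rfl | hρ
  · exact h1
  · rcases hρ with rfl; exact h2

lemma mem_pl_pairL {σ : Plane} {A B : Point} (h : σ ∈ planesOf inc {A, B}) : inc A σ :=
  h A (Set.mem_insert _ _)

lemma mem_pl_pairR {σ : Plane} {A B : Point} (h : σ ∈ planesOf inc {A, B}) : inc B σ :=
  h B (Set.mem_insert_of_mem _ rfl)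

lemma mk_pl_pair {σ : Plane} {A B : Point} (h1 : inc A σ) (h2 : inc B σ) :
    σ ∈ planesOf inc {A, B} := by
  intro R hR
  rcases hR with rfl | hR
  · exact h1
  · rcases hR with rfl; exact h2

/-- `σ` belongs to the plane-set of the join line of `σ, τ`. -/
lemma jmemL (σ τ : Plane) : σ ∈ planesOf inc (pointsOf inc {σ, τ}) :=
  fun A hA => mem_po_pairL hA

lemma jmemR (σ τ : Plane) : τ ∈ planesOf inc (pointsOf inc {σ, τ}) :=
  fun A hA => mem_po_pairR hA

lemma jmemL' (A B : Point) : A ∈ pointsOf inc (planesOf inc {A, B}) :=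
  fun σ hσ => mem_pl_pairL hσ

lemma jmemR' (A B : Point) : B ∈ pointsOf inc (planesOf inc {A, B}) :=
  fun σ hσ => mem_pl_pairR hσ

/-- Two distinct planes span a line. -/
lemma joinPlanes_isLine (h2 : Axiom2 inc) (h4 : Axiom4 inc) {σ τ : Plane} (h : σ ≠ τ) :
    IsLine inc (pointsOf inc {σ, τ}) (planesOf inc (pointsOf inc {σ, τ})) := by
  obtain ⟨A, B, _, hA, hB, _, hAB, _, _⟩ := h2.2 σ τ
  have h4' := h4 A B σ τ hAB h (mem_po_pairL hA) (mem_po_pairR hA)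
      (mem_po_pairL hB) (mem_po_pairR hB)
  exact ⟨A, B, σ, τ, hAB, h, mem_po_pairL hA, mem_po_pairR hA, mem_po_pairL hB,
    mem_po_pairR hB, rfl, h4'.1.symm⟩

/-- Two distinct points span a line. -/
lemma joinPoints_isLine (h2 : Axiom2 inc) (h4 : Axiom4 inc) {A B : Point} (h : A ≠ B) :
    IsLine inc (pointsOf inc (planesOf inc {A, B})) (planesOf inc {A, B}) := by
  obtain ⟨σ, τ, _, hσ, hτ, _, hστ, _, _⟩ := h2.1 A B
  have h4' := h4 A B σ τ h hστ (mem_pl_pairL hσ) (mem_pl_pairL hτ)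
      (mem_pl_pairR hσ) (mem_pl_pairR hτ)
  exact ⟨A, B, σ, τ, h, hστ, mem_pl_pairL hσ, mem_pl_pairL hτ, mem_pl_pairR hσ,
    mem_pl_pairR hτ, h4'.2.symm, rfl⟩

/-- A point of a line is incident with every plane of the line. -/
lemma line_inc (h4 : Axiom4 inc) {l : Set Point} {lp : Set Plane}
    (hl : IsLine inc l lp) {A : Point} {σ : Plane} (hA : A ∈ l) (hσ : σ ∈ lp) : inc A σ := by
  obtain ⟨A₀, B₀, α₀, β₀, hAB, hab, i1, i2, i3, i4, e1, e2⟩ := hl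
  have h4' := h4 A₀ B₀ α₀ β₀ hAB hab i1 i2 i3 i4
  rw [e1, h4'.2] at hA
  exact hA σ (e2 ▸ hσ)

/-- A line is determined by any two of its distinct points. -/
lemma line_pts (h4 : Axiom4 inc) {l : Set Point} {lp : Set Plane}
    (hl : IsLine inc l lp) {A B : Point} (hAB : A ≠ B) (hA : A ∈ l) (hB : B ∈ l) :
    l = pointsOf inc (planesOf inc {A, B}) ∧ lp = planesOf inc {A, B} := by
  obtain ⟨A₀, B₀, α₀, β₀, hAB₀, hab, i1, i2, i3, i4, e1, e2⟩ := hl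
  subst e1 e2
  have hA' := hA; have hB' := hB
  have h4AB := h4 A B α₀ β₀ hAB hab (mem_po_pairL hA) (mem_po_pairR hA)
      (mem_po_pairL hB) (mem_po_pairR hB)
  have h4A0 := h4 A₀ B₀ α₀ β₀ hAB₀ hab i1 i2 i3 i4
  constructor
  · exact h4AB.2
  · rw [h4A0.1, h4AB.1]

/-- A line is determined by any two of its distinct planes. -/
lemma line_pls (h4 : Axiom4 inc) {l : Set Point} {lp : Set Plane}
    (hl : IsLine inc l lp) {σ τ : Plane} (hστ : σ ≠ τ) (hσ : σ ∈ lp) (hτ : τ ∈ lp) :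
    l = pointsOf inc {σ, τ} ∧ lp = planesOf inc (pointsOf inc {σ, τ}) := by
  obtain ⟨A₀, B₀, α₀, β₀, hAB₀, hab, i1, i2, i3, i4, e1, e2⟩ := hl
  subst e1 e2
  have h4στ := h4 A₀ B₀ σ τ hAB₀ hστ (mem_pl_pairL hσ) (mem_pl_pairL hτ)
      (mem_pl_pairR hσ) (mem_pl_pairR hτ)
  have h4A0 := h4 A₀ B₀ α₀ β₀ hAB₀ hab i1 i2 i3 i4
  constructor
  · rw [h4A0.2, h4στ.2]
  · exact h4στ.1

/-- Every line has two distinct points. -/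
lemma line_two (h2 : Axiom2 inc) {l : Set Point} {lp : Set Plane} (hl : IsLine inc l lp) :
    ∃ A B : Point, A ≠ B ∧ A ∈ l ∧ B ∈ l := by
  obtain ⟨A₀, B₀, α₀, β₀, hAB₀, hab, i1, i2, i3, i4, e1, e2⟩ := hl
  obtain ⟨A, B, _, hA, hB, _, hAB, _, _⟩ := h2.2 α₀ β₀
  exact ⟨A, B, hAB, e1 ▸ hA, e1 ▸ hB⟩

/-- Lines with the same point set have the same plane set. -/
lemma line_unique (h2 : Axiom2 inc) (h4 : Axiom4 inc) {l m : Set Point} {lp mp : Set Plane}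
    (hl : IsLine inc l lp) (hm : IsLine inc m mp) (hlm : l = m) : lp = mp := by
  obtain ⟨A, B, hAB, hA, hB⟩ := line_two h2 hl
  rw [(line_pts h4 hl hAB hA hB).2, (line_pts h4 hm hAB (hlm ▸ hA) (hlm ▸ hB)).2]

end Lemmas

theorem axiomP_implies_dual (inc : Point → Plane → Prop) [Nonempty Point] [Nonempty Plane]
    (h1 : Axiom1 inc) (h2 : Axiom2 inc) (h3 : Axiom3 inc) (h4 : Axiom4 inc)
    (hP : AxiomP inc) :
    ∀ (l1P l2P : Set Point) (l1Pl l2Pl : Set Plane) (O : Point) (ω : Plane)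
      (α1 β1 γ1 α2 β2 γ2 : Plane),
      IsLine inc l1P l1Pl → IsLine inc l2P l2Pl → (l1P, l1Pl) ≠ (l2P, l2Pl) →
      O ∈ l1P → O ∈ l2P → ω ∈ l1Pl → ω ∈ l2Pl →
      α1 ∈ l1Pl → β1 ∈ l1Pl → γ1 ∈ l1Pl → α2 ∈ l2Pl → β2 ∈ l2Pl → γ2 ∈ l2Pl →
      List.Pairwise (· ≠ ·) [ω, α1, β1, γ1, α2, β2, γ2] →
      ∀ α0 β0 γ0 : Plane,
        planesOf inc (pointsOf inc {β1, γ2}) ∩ planesOf inc (pointsOf inc {β2, γ1}) = {α0} →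
        planesOf inc (pointsOf inc {γ1, α2}) ∩ planesOf inc (pointsOf inc {γ2, α1}) = {β0} →
        planesOf inc (pointsOf inc {α1, β2}) ∩ planesOf inc (pointsOf inc {α2, β1}) = {γ0} →
        CollinearPlanes inc {α0, β0, γ0} := by
  intro l1P l2P l1Pl l2Pl O ω α1 β1 γ1 α2 β2 γ2 hl1 hl2 hnel hO1 hO2 hω1 hω2
    hα1 hβ1 hγ1 hα2 hβ2 hγ2 hpw α0 β0 γ0 hα0 hβ0 hγ0
  simp only [List.pairwise_cons, List.mem_cons, List.not_mem_nil, or_false,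
    List.mem_singleton, forall_eq_or_imp, forall_eq, List.Pairwise.nil, and_true] at hpw
  obtain ⟨⟨dωα1, dωβ1, dωγ1, dωα2, dωβ2, dωγ2⟩, ⟨dα1β1, dα1γ1, dα1α2, dα1β2, dα1γ2⟩,
    ⟨dβ1γ1, dβ1α2, dβ1β2, dβ1γ2⟩, ⟨dγ1α2, dγ1β2, dγ1γ2⟩, ⟨dα2β2, dα2γ2⟩, dβ2γ2, -⟩ := hpw
  -- incidence of O with all configuration planes
  have hOω : inc O ω := line_inc h4 hl1 hO1 hω1
  have hOα1 : inc O α1 := line_inc h4 hl1 hO1 hα1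
  have hOβ1 : inc O β1 := line_inc h4 hl1 hO1 hβ1
  have hOγ1 : inc O γ1 := line_inc h4 hl1 hO1 hγ1
  have hOα2 : inc O α2 := line_inc h4 hl2 hO2 hα2
  have hOβ2 : inc O β2 := line_inc h4 hl2 hO2 hβ2
  have hOγ2 : inc O γ2 := line_inc h4 hl2 hO2 hγ2
  -- a plane π not through O
  obtain ⟨π, hπ'⟩ := (Set.ne_univ_iff_exists_notMem _).1 (h1.1 O)
  have hπ : ¬ inc O π := fun h => hπ' (fun A hA => by rcases hA with rfl; exact h)
  -- the two given lines as joins of planes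
  have e1 := line_pls h4 hl1 dβ1γ1 hβ1 hγ1
  have e2 := line_pls h4 hl2 dβ2γ2 hβ2 hγ2
  -- master contradiction lemmas
  have M1 : ∀ {l : Set Point} {lp : Set Plane} {σ τ ρ : Plane}, IsLine inc l lp →
      σ ∈ lp → τ ∈ lp → σ ≠ τ → σ ∈ l1Pl → τ ∈ l1Pl → ρ ∈ lp → ρ ∈ l2Pl → ρ ≠ ω →
      False := by
    intro l lp σ τ ρ hl hσ hτ hστ hσ1 hτ1 hρ hρ2 hρω
    have g1 := (line_pls h4 hl hστ hσ hτ).1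
    have g2 := (line_pls h4 hl1 hστ hσ1 hτ1).1
    have hlpl : lp = l1Pl := line_unique h2 h4 hl hl1 (g1.trans g2.symm)
    have hρ1 : ρ ∈ l1Pl := hlpl ▸ hρ
    have f1 := (line_pls h4 hl1 hρω hρ1 hω1).1
    have f2 := (line_pls h4 hl2 hρω hρ2 hω2).1
    have hpe : l1P = l2P := f1.trans f2.symm
    exact hnel (Prod.ext hpe (line_unique h2 h4 hl1 hl2 hpe))
  have M2 : ∀ {l : Set Point} {lp : Set Plane} {σ τ ρ : Plane}, IsLine inc l lp →
      σ ∈ lp → τ ∈ lp → σ ≠ τ → σ ∈ l2Pl → τ ∈ l2Pl → ρ ∈ lp → ρ ∈ l1Pl → ρ ≠ ω →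
      False := by
    intro l lp σ τ ρ hl hσ hτ hστ hσ2 hτ2 hρ hρ1 hρω
    have g1 := (line_pls h4 hl hστ hσ hτ).1
    have g2 := (line_pls h4 hl2 hστ hσ2 hτ2).1
    have hlpl : lp = l2Pl := line_unique h2 h4 hl hl2 (g1.trans g2.symm)
    have hρ2 : ρ ∈ l2Pl := hlpl ▸ hρ
    have f1 := (line_pls h4 hl1 hρω hρ1 hω1).1
    have f2 := (line_pls h4 hl2 hρω hρ2 hω2).1
    have hpe : l1P = l2P := f1.trans f2.symm
    exact hnel (Prod.ext hpe (line_unique h2 h4 hl1 hl2 hpe))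
  have ne_g_L1 : pointsOf inc {γ1, γ2} ≠ pointsOf inc {β1, γ1} := by
    intro hEq
    have hpl := line_unique h2 h4 (joinPlanes_isLine h2 h4 dγ1γ2) (joinPlanes_isLine h2 h4 dβ1γ1) hEq
    exact M1 (joinPlanes_isLine h2 h4 dγ1γ2) (by rw [hpl]; exact jmemL β1 γ1) (jmemL γ1 γ2) dβ1γ1 hβ1 hγ1 (jmemR γ1 γ2) hγ2 (Ne.symm dωγ2)
  have ne_g_u1 : pointsOf inc {γ1, γ2} ≠ pointsOf inc {β2, γ1} := by
    intro hEq
    have hpl := line_unique h2 h4 (joinPlanes_isLine h2 h4 dγ1γ2) (joinPlanes_isLine h2 h4 dγ1β2.symm) hEq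
    exact M2 (joinPlanes_isLine h2 h4 dγ1γ2) (by rw [hpl]; exact jmemL β2 γ1) (jmemR γ1 γ2) dβ2γ2 hβ2 hγ2 (jmemL γ1 γ2) hγ1 (Ne.symm dωγ1)
  have ne_g_u2 : pointsOf inc {γ1, γ2} ≠ pointsOf inc {γ1, α2} := by
    intro hEq
    have hpl := line_unique h2 h4 (joinPlanes_isLine h2 h4 dγ1γ2) (joinPlanes_isLine h2 h4 dγ1α2) hEq
    exact M2 (joinPlanes_isLine h2 h4 dγ1γ2) (by rw [hpl]; exact jmemR γ1 α2) (jmemR γ1 γ2) dα2γ2 hα2 hγ2 (jmemL γ1 γ2) hγ1 (Ne.symm dωγ1)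
  have ne_g_L2 : pointsOf inc {γ1, γ2} ≠ pointsOf inc {β2, γ2} := by
    intro hEq
    have hpl := line_unique h2 h4 (joinPlanes_isLine h2 h4 dγ1γ2) (joinPlanes_isLine h2 h4 dβ2γ2) hEq
    exact M2 (joinPlanes_isLine h2 h4 dγ1γ2) (by rw [hpl]; exact jmemL β2 γ2) (jmemR γ1 γ2) dβ2γ2 hβ2 hγ2 (jmemL γ1 γ2) hγ1 (Ne.symm dωγ1)
  have ne_g_v2 : pointsOf inc {γ1, γ2} ≠ pointsOf inc {γ2, α1} := by
    intro hEq
    have hpl := line_unique h2 h4 (joinPlanes_isLine h2 h4 dγ1γ2) (joinPlanes_isLine h2 h4 dα1γ2.symm) hEq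
    exact M1 (joinPlanes_isLine h2 h4 dγ1γ2) (by rw [hpl]; exact jmemR γ2 α1) (jmemL γ1 γ2) dα1γ1 hα1 hγ1 (jmemR γ1 γ2) hγ2 (Ne.symm dωγ2)
  have ne_g_v1 : pointsOf inc {γ1, γ2} ≠ pointsOf inc {β1, γ2} := by
    intro hEq
    have hpl := line_unique h2 h4 (joinPlanes_isLine h2 h4 dγ1γ2) (joinPlanes_isLine h2 h4 dβ1γ2) hEq
    exact M1 (joinPlanes_isLine h2 h4 dγ1γ2) (by rw [hpl]; exact jmemL β1 γ2) (jmemL γ1 γ2) dβ1γ1 hβ1 hγ1 (jmemR γ1 γ2) hγ2 (Ne.symm dωγ2)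
  have ne_L1_u1 : pointsOf inc {β1, γ1} ≠ pointsOf inc {β2, γ1} := by
    intro hEq
    have hpl := line_unique h2 h4 (joinPlanes_isLine h2 h4 dβ1γ1) (joinPlanes_isLine h2 h4 dγ1β2.symm) hEq
    exact M1 (joinPlanes_isLine h2 h4 dβ1γ1) (jmemL β1 γ1) (jmemR β1 γ1) dβ1γ1 hβ1 hγ1 (by rw [hpl]; exact jmemL β2 γ1) hβ2 (Ne.symm dωβ2)
  have ne_L1_u2 : pointsOf inc {β1, γ1} ≠ pointsOf inc {γ1, α2} := by
    intro hEq
    have hpl := line_unique h2 h4 (joinPlanes_isLine h2 h4 dβ1γ1) (joinPlanes_isLine h2 h4 dγ1α2) hEq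
    exact M1 (joinPlanes_isLine h2 h4 dβ1γ1) (jmemL β1 γ1) (jmemR β1 γ1) dβ1γ1 hβ1 hγ1 (by rw [hpl]; exact jmemR γ1 α2) hα2 (Ne.symm dωα2)
  have ne_L1_L2 : pointsOf inc {β1, γ1} ≠ pointsOf inc {β2, γ2} := by
    intro hEq
    have hpe : l1P = l2P := e1.1.trans (hEq.trans e2.1.symm)
    exact hnel (Prod.ext hpe (line_unique h2 h4 hl1 hl2 hpe))
  have ne_L1_v2 : pointsOf inc {β1, γ1} ≠ pointsOf inc {γ2, α1} := by
    intro hEq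
    have hpl := line_unique h2 h4 (joinPlanes_isLine h2 h4 dβ1γ1) (joinPlanes_isLine h2 h4 dα1γ2.symm) hEq
    exact M1 (joinPlanes_isLine h2 h4 dβ1γ1) (jmemL β1 γ1) (jmemR β1 γ1) dβ1γ1 hβ1 hγ1 (by rw [hpl]; exact jmemL γ2 α1) hγ2 (Ne.symm dωγ2)
  have ne_L1_v1 : pointsOf inc {β1, γ1} ≠ pointsOf inc {β1, γ2} := by
    intro hEq
    have hpl := line_unique h2 h4 (joinPlanes_isLine h2 h4 dβ1γ1) (joinPlanes_isLine h2 h4 dβ1γ2) hEq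
    exact M1 (joinPlanes_isLine h2 h4 dβ1γ1) (jmemL β1 γ1) (jmemR β1 γ1) dβ1γ1 hβ1 hγ1 (by rw [hpl]; exact jmemR β1 γ2) hγ2 (Ne.symm dωγ2)
  have ne_u1_u2 : pointsOf inc {β2, γ1} ≠ pointsOf inc {γ1, α2} := by
    intro hEq
    have hpl := line_unique h2 h4 (joinPlanes_isLine h2 h4 dγ1β2.symm) (joinPlanes_isLine h2 h4 dγ1α2) hEq
    exact M2 (joinPlanes_isLine h2 h4 dγ1β2.symm) (jmemL β2 γ1) (by rw [hpl]; exact jmemR γ1 α2) dα2β2.symm hβ2 hα2 (jmemR β2 γ1) hγ1 (Ne.symm dωγ1)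
  have ne_u1_L2 : pointsOf inc {β2, γ1} ≠ pointsOf inc {β2, γ2} := by
    intro hEq
    have hpl := line_unique h2 h4 (joinPlanes_isLine h2 h4 dγ1β2.symm) (joinPlanes_isLine h2 h4 dβ2γ2) hEq
    exact M2 (joinPlanes_isLine h2 h4 dγ1β2.symm) (jmemL β2 γ1) (by rw [hpl]; exact jmemR β2 γ2) dβ2γ2 hβ2 hγ2 (jmemR β2 γ1) hγ1 (Ne.symm dωγ1)
  have ne_u1_v2 : pointsOf inc {β2, γ1} ≠ pointsOf inc {γ2, α1} := by
    intro hEq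
    have hpl := line_unique h2 h4 (joinPlanes_isLine h2 h4 dγ1β2.symm) (joinPlanes_isLine h2 h4 dα1γ2.symm) hEq
    exact M1 (joinPlanes_isLine h2 h4 dγ1β2.symm) (by rw [hpl]; exact jmemR γ2 α1) (jmemR β2 γ1) dα1γ1 hα1 hγ1 (jmemL β2 γ1) hβ2 (Ne.symm dωβ2)
  have ne_u1_v1 : pointsOf inc {β2, γ1} ≠ pointsOf inc {β1, γ2} := by
    intro hEq
    have hpl := line_unique h2 h4 (joinPlanes_isLine h2 h4 dγ1β2.symm) (joinPlanes_isLine h2 h4 dβ1γ2) hEq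
    exact M1 (joinPlanes_isLine h2 h4 dγ1β2.symm) (by rw [hpl]; exact jmemL β1 γ2) (jmemR β2 γ1) dβ1γ1 hβ1 hγ1 (jmemL β2 γ1) hβ2 (Ne.symm dωβ2)
  have ne_u2_L2 : pointsOf inc {γ1, α2} ≠ pointsOf inc {β2, γ2} := by
    intro hEq
    have hpl := line_unique h2 h4 (joinPlanes_isLine h2 h4 dγ1α2) (joinPlanes_isLine h2 h4 dβ2γ2) hEq
    exact M2 (joinPlanes_isLine h2 h4 dγ1α2) (jmemR γ1 α2) (by rw [hpl]; exact jmemR β2 γ2) dα2γ2 hα2 hγ2 (jmemL γ1 α2) hγ1 (Ne.symm dωγ1)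
  have ne_u2_v2 : pointsOf inc {γ1, α2} ≠ pointsOf inc {γ2, α1} := by
    intro hEq
    have hpl := line_unique h2 h4 (joinPlanes_isLine h2 h4 dγ1α2) (joinPlanes_isLine h2 h4 dα1γ2.symm) hEq
    exact M1 (joinPlanes_isLine h2 h4 dγ1α2) (by rw [hpl]; exact jmemR γ2 α1) (jmemL γ1 α2) dα1γ1 hα1 hγ1 (jmemR γ1 α2) hα2 (Ne.symm dωα2)
  have ne_u2_v1 : pointsOf inc {γ1, α2} ≠ pointsOf inc {β1, γ2} := by
    intro hEq
    have hpl := line_unique h2 h4 (joinPlanes_isLine h2 h4 dγ1α2) (joinPlanes_isLine h2 h4 dβ1γ2) hEq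
    exact M1 (joinPlanes_isLine h2 h4 dγ1α2) (by rw [hpl]; exact jmemL β1 γ2) (jmemL γ1 α2) dβ1γ1 hβ1 hγ1 (jmemR γ1 α2) hα2 (Ne.symm dωα2)
  have ne_L2_v2 : pointsOf inc {β2, γ2} ≠ pointsOf inc {γ2, α1} := by
    intro hEq
    have hpl := line_unique h2 h4 (joinPlanes_isLine h2 h4 dβ2γ2) (joinPlanes_isLine h2 h4 dα1γ2.symm) hEq
    exact M2 (joinPlanes_isLine h2 h4 dβ2γ2) (jmemL β2 γ2) (jmemR β2 γ2) dβ2γ2 hβ2 hγ2 (by rw [hpl]; exact jmemR γ2 α1) hα1 (Ne.symm dωα1)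
  have ne_L2_v1 : pointsOf inc {β2, γ2} ≠ pointsOf inc {β1, γ2} := by
    intro hEq
    have hpl := line_unique h2 h4 (joinPlanes_isLine h2 h4 dβ2γ2) (joinPlanes_isLine h2 h4 dβ1γ2) hEq
    exact M2 (joinPlanes_isLine h2 h4 dβ2γ2) (jmemL β2 γ2) (jmemR β2 γ2) dβ2γ2 hβ2 hγ2 (by rw [hpl]; exact jmemL β1 γ2) hβ1 (Ne.symm dωβ1)
  have ne_v2_v1 : pointsOf inc {γ2, α1} ≠ pointsOf inc {β1, γ2} := by
    intro hEq
    have hpl := line_unique h2 h4 (joinPlanes_isLine h2 h4 dα1γ2.symm) (joinPlanes_isLine h2 h4 dβ1γ2) hEq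
    exact M1 (joinPlanes_isLine h2 h4 dα1γ2.symm) (jmemR γ2 α1) (by rw [hpl]; exact jmemL β1 γ2) dα1β1 hα1 hβ1 (jmemL γ2 α1) hγ2 (Ne.symm dωγ2)
  have ne_w1_w2 : pointsOf inc {α1, β2} ≠ pointsOf inc {α2, β1} := by
    intro hEq
    have hpl := line_unique h2 h4 (joinPlanes_isLine h2 h4 dα1β2) (joinPlanes_isLine h2 h4 dβ1α2.symm) hEq
    exact M1 (joinPlanes_isLine h2 h4 dα1β2) (jmemL α1 β2) (by rw [hpl]; exact jmemR α2 β1) dα1β1 hα1 hβ1 (jmemR α1 β2) hβ2 (Ne.symm dωβ2)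
  -- section points
  have secPt : ∀ (σ τ : Plane), ∃ R, R ∈ pointsOf inc {σ, τ} ∧ inc R π := by
    intro σ τ
    obtain ⟨R, hR⟩ := Set.nonempty_iff_ne_empty.2 (h3.2 σ τ π)
    exact ⟨R, mk_po_pair (hR σ (by simp)) (hR τ (by simp)), hR π (by simp)⟩
  obtain ⟨Os, hOsm, hOsπ⟩ := secPt γ1 γ2
  obtain ⟨Pp, hPm, hPπ⟩ := secPt β1 γ1
  obtain ⟨Xq, hXqm, hXqπ⟩ := secPt β2 γ1
  obtain ⟨Yp, hYm, hYπ⟩ := secPt γ1 α2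
  obtain ⟨Qp, hQm, hQπ⟩ := secPt β2 γ2
  obtain ⟨Yq, hYqm, hYqπ⟩ := secPt γ2 α1
  obtain ⟨Xp, hXm, hXπ⟩ := secPt β1 γ2
  -- distinct star lines have distinct sections
  have secNe : ∀ {σ τ σ' τ' : Plane} {R S : Point}, σ ≠ τ → σ' ≠ τ' →
      pointsOf inc {σ, τ} ≠ pointsOf inc {σ', τ'} → inc O σ → inc O τ → inc O σ' → inc O τ' →
      R ∈ pointsOf inc {σ, τ} → inc R π → S ∈ pointsOf inc {σ', τ'} → inc S π → R ≠ S := by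
    intro σ τ σ' τ' R S hd hd' hlne hOσ hOτ hOσ' hOτ' hR hRπ hS hSπ hRS
    subst hRS
    have hOR : O ≠ R := fun h => hπ (h.symm ▸ hRπ)
    have q1 := (line_pts h4 (joinPlanes_isLine h2 h4 hd) hOR (mk_po_pair hOσ hOτ) hR).1
    have q2 := (line_pts h4 (joinPlanes_isLine h2 h4 hd') hOR (mk_po_pair hOσ' hOτ') hS).1
    exact hlne (q1.trans q2.symm)
  have p_Os_Pp : Os ≠ Pp := secNe dγ1γ2 dβ1γ1 ne_g_L1 hOγ1 hOγ2 hOβ1 hOγ1 hOsm hOsπ hPm hPπ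
  have p_Os_Xq : Os ≠ Xq := secNe dγ1γ2 dγ1β2.symm ne_g_u1 hOγ1 hOγ2 hOβ2 hOγ1 hOsm hOsπ hXqm hXqπ
  have p_Os_Yp : Os ≠ Yp := secNe dγ1γ2 dγ1α2 ne_g_u2 hOγ1 hOγ2 hOγ1 hOα2 hOsm hOsπ hYm hYπ
  have p_Os_Qp : Os ≠ Qp := secNe dγ1γ2 dβ2γ2 ne_g_L2 hOγ1 hOγ2 hOβ2 hOγ2 hOsm hOsπ hQm hQπ
  have p_Os_Yq : Os ≠ Yq := secNe dγ1γ2 dα1γ2.symm ne_g_v2 hOγ1 hOγ2 hOγ2 hOα1 hOsm hOsπ hYqm hYqπ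
  have p_Os_Xp : Os ≠ Xp := secNe dγ1γ2 dβ1γ2 ne_g_v1 hOγ1 hOγ2 hOβ1 hOγ2 hOsm hOsπ hXm hXπ
  have p_Pp_Xq : Pp ≠ Xq := secNe dβ1γ1 dγ1β2.symm ne_L1_u1 hOβ1 hOγ1 hOβ2 hOγ1 hPm hPπ hXqm hXqπ
  have p_Pp_Yp : Pp ≠ Yp := secNe dβ1γ1 dγ1α2 ne_L1_u2 hOβ1 hOγ1 hOγ1 hOα2 hPm hPπ hYm hYπ
  have p_Pp_Qp : Pp ≠ Qp := secNe dβ1γ1 dβ2γ2 ne_L1_L2 hOβ1 hOγ1 hOβ2 hOγ2 hPm hPπ hQm hQπ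
  have p_Pp_Yq : Pp ≠ Yq := secNe dβ1γ1 dα1γ2.symm ne_L1_v2 hOβ1 hOγ1 hOγ2 hOα1 hPm hPπ hYqm hYqπ
  have p_Pp_Xp : Pp ≠ Xp := secNe dβ1γ1 dβ1γ2 ne_L1_v1 hOβ1 hOγ1 hOβ1 hOγ2 hPm hPπ hXm hXπ
  have p_Xq_Yp : Xq ≠ Yp := secNe dγ1β2.symm dγ1α2 ne_u1_u2 hOβ2 hOγ1 hOγ1 hOα2 hXqm hXqπ hYm hYπ
  have p_Xq_Qp : Xq ≠ Qp := secNe dγ1β2.symm dβ2γ2 ne_u1_L2 hOβ2 hOγ1 hOβ2 hOγ2 hXqm hXqπ hQm hQπ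
  have p_Xq_Yq : Xq ≠ Yq := secNe dγ1β2.symm dα1γ2.symm ne_u1_v2 hOβ2 hOγ1 hOγ2 hOα1 hXqm hXqπ hYqm hYqπ
  have p_Xq_Xp : Xq ≠ Xp := secNe dγ1β2.symm dβ1γ2 ne_u1_v1 hOβ2 hOγ1 hOβ1 hOγ2 hXqm hXqπ hXm hXπ
  have p_Yp_Qp : Yp ≠ Qp := secNe dγ1α2 dβ2γ2 ne_u2_L2 hOγ1 hOα2 hOβ2 hOγ2 hYm hYπ hQm hQπ
  have p_Yp_Yq : Yp ≠ Yq := secNe dγ1α2 dα1γ2.symm ne_u2_v2 hOγ1 hOα2 hOγ2 hOα1 hYm hYπ hYqm hYqπ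
  have p_Yp_Xp : Yp ≠ Xp := secNe dγ1α2 dβ1γ2 ne_u2_v1 hOγ1 hOα2 hOβ1 hOγ2 hYm hYπ hXm hXπ
  have p_Qp_Yq : Qp ≠ Yq := secNe dβ2γ2 dα1γ2.symm ne_L2_v2 hOβ2 hOγ2 hOγ2 hOα1 hQm hQπ hYqm hYqπ
  have p_Qp_Xp : Qp ≠ Xp := secNe dβ2γ2 dβ1γ2 ne_L2_v1 hOβ2 hOγ2 hOβ1 hOγ2 hQm hQπ hXm hXπ
  have p_Yq_Xp : Yq ≠ Xp := secNe dα1γ2.symm dβ1γ2 ne_v2_v1 hOγ2 hOα1 hOβ1 hOγ2 hYqm hYqπ hXm hXπ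
  -- incidences of cross-join planes
  have hα0m : α0 ∈ planesOf inc (pointsOf inc {β1, γ2}) ∩ planesOf inc (pointsOf inc {β2, γ1}) := by
    rw [hα0]; exact Set.mem_singleton _
  have hβ0m : β0 ∈ planesOf inc (pointsOf inc {γ1, α2}) ∩ planesOf inc (pointsOf inc {γ2, α1}) := by
    rw [hβ0]; exact Set.mem_singleton _
  have hγ0m : γ0 ∈ planesOf inc (pointsOf inc {α1, β2}) ∩ planesOf inc (pointsOf inc {α2, β1}) := by
    rw [hγ0]; exact Set.mem_singleton _
  have hOα0 : inc O α0 := hα0m.1 O (mk_po_pair hOβ1 hOγ2)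
  have hOβ0 : inc O β0 := hβ0m.1 O (mk_po_pair hOγ1 hOα2)
  have hOγ0 : inc O γ0 := hγ0m.1 O (mk_po_pair hOα1 hOβ2)
  have dα0π : α0 ≠ π := fun h => hπ (h ▸ hOα0)
  have dβ0π : β0 ≠ π := fun h => hπ (h ▸ hOβ0)
  have dα1π : α1 ≠ π := fun h => hπ (h ▸ hOα1)
  have dβ1π : β1 ≠ π := fun h => hπ (h ▸ hOβ1)
  have dγ1π : γ1 ≠ π := fun h => hπ (h ▸ hOγ1)
  have dα2π : α2 ≠ π := fun h => hπ (h ▸ hOα2)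
  have dβ2π : β2 ≠ π := fun h => hπ (h ▸ hOβ2)
  have dγ2π : γ2 ≠ π := fun h => hπ (h ▸ hOγ2)
  -- distinct planes through O cut π in distinct lines
  have sLNe : ∀ {σ τ : Plane}, σ ≠ τ → inc O σ → inc O τ →
      pointsOf inc {σ, π} ≠ pointsOf inc {τ, π} := by
    intro σ τ hd hOσ hOτ hEq
    have hσπ : σ ≠ π := fun h => hπ (h ▸ hOσ)
    have hτπ : τ ≠ π := fun h => hπ (h ▸ hOτ)
    have hpl := line_unique h2 h4 (joinPlanes_isLine h2 h4 hσπ) (joinPlanes_isLine h2 h4 hτπ) hEq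
    have hτm : τ ∈ planesOf inc (pointsOf inc {σ, π}) := by rw [hpl]; exact jmemL τ π
    have q := (line_pls h4 (joinPlanes_isLine h2 h4 hσπ) hd (jmemL σ π) hτm).1
    have hOm : O ∈ pointsOf inc {σ, π} := by rw [q]; exact mk_po_pair hOσ hOτ
    exact hπ (mem_po_pairR hOm)
  -- α0 ≠ β0
  have dα0β0 : α0 ≠ β0 := by
    intro h
    by_cases hg : β0 = γ1
    · have hγ1m : γ1 ∈ planesOf inc (pointsOf inc {β1, γ2}) := (h.trans hg) ▸ hα0m.1
      exact M1 (joinPlanes_isLine h2 h4 dβ1γ2) (jmemL β1 γ2) hγ1m dβ1γ1 hβ1 hγ1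
        (jmemR β1 γ2) hγ2 (Ne.symm dωγ2)
    · have hβ0u1 : β0 ∈ planesOf inc (pointsOf inc {β2, γ1}) := h ▸ hα0m.2
      have q1 := (line_pls h4 (joinPlanes_isLine h2 h4 dγ1β2.symm) hg hβ0u1 (jmemR β2 γ1)).1
      have q2 := (line_pls h4 (joinPlanes_isLine h2 h4 dγ1α2) hg hβ0m.1 (jmemL γ1 α2)).1
      exact ne_u1_u2 (q1.trans q2.symm)
  -- the join of two section points is the section of the corresponding plane
  have jln : ∀ {R S : Point} {σ : Plane}, R ≠ S → inc R σ → inc S σ → inc R π → inc S π →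
      σ ≠ π → pointsOf inc (planesOf inc {R, S}) = pointsOf inc {σ, π} := by
    intro R S σ hRS hRσ hSσ hRπ hSπ hσπ
    exact (line_pls h4 (joinPoints_isLine h2 h4 hRS) hσπ (mk_pl_pair hRσ hSσ)
      (mk_pl_pair hRπ hSπ)).1
  -- two sections meet in exactly one point
  have meetSec : ∀ {σ τ : Plane} {R : Point}, σ ≠ τ → inc O σ → inc O τ → inc R σ → inc R τ →
      inc R π → pointsOf inc {σ, π} ∩ pointsOf inc {τ, π} = {R} := by
    intro σ τ R hd hOσ hOτ hRσ hRτ hRπ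
    have hσπ : σ ≠ π := fun h => hπ (h ▸ hOσ)
    have hτπ : τ ≠ π := fun h => hπ (h ▸ hOτ)
    ext x
    constructor
    · rintro ⟨hx1, hx2⟩
      by_contra hxR
      have hRx : R ≠ x := fun h => hxR (h ▸ Set.mem_singleton _)
      have q1 := (line_pts h4 (joinPlanes_isLine h2 h4 hσπ) hRx (mk_po_pair hRσ hRπ) hx1).1
      have q2 := (line_pts h4 (joinPlanes_isLine h2 h4 hτπ) hRx (mk_po_pair hRτ hRπ) hx2).1
      exact sLNe hd hOσ hOτ (q1.trans q2.symm)
    · intro hx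
      rw [Set.mem_singleton_iff] at hx
      subst hx
      exact ⟨mk_po_pair hRσ hRπ, mk_po_pair hRτ hRπ⟩
  -- the three meeting points
  obtain ⟨T, hTm, hTπ⟩ := secPt α0 β0
  obtain ⟨Zq, hZqm, hZqπ⟩ := secPt α2 β1
  obtain ⟨Zc, hZm, hZπ⟩ := secPt α1 β2
  have hPl1 : Pp ∈ l1P := by rw [e1.1]; exact hPm
  have hQl2 : Qp ∈ l2P := by rw [e2.1]; exact hQm
  -- the three cross-join conditions for Pappus in the plane π
  have cond1 : pointsOf inc (planesOf inc {Xq, Xp}) ∩ pointsOf inc (planesOf inc {Yq, Yp})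
      = {T} := by
    rw [jln p_Xq_Xp (hα0m.2 Xq hXqm) (hα0m.1 Xp hXm) hXqπ hXπ dα0π,
      jln p_Yp_Yq.symm (hβ0m.2 Yq hYqm) (hβ0m.1 Yp hYm) hYqπ hYπ dβ0π]
    exact meetSec dα0β0 hOα0 hOβ0 (mem_po_pairL hTm) (mem_po_pairR hTm) hTπ
  have cond2 : pointsOf inc (planesOf inc {Yp, Qp}) ∩ pointsOf inc (planesOf inc {Xp, Pp})
      = {Zq} := by
    rw [jln p_Yp_Qp (mem_po_pairR hYm) (line_inc h4 hl2 hQl2 hα2) hYπ hQπ dα2π,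
      jln p_Pp_Xp.symm (mem_po_pairL hXm) (mem_po_pairL hPm) hXπ hPπ dβ1π]
    exact meetSec dβ1α2.symm hOα2 hOβ1 (mem_po_pairL hZqm) (mem_po_pairR hZqm) hZqπ
  have cond3 : pointsOf inc (planesOf inc {Pp, Yq}) ∩ pointsOf inc (planesOf inc {Qp, Xq})
      = {Zc} := by
    rw [jln p_Pp_Yq (line_inc h4 hl1 hPl1 hα1) (mem_po_pairR hYqm) hPπ hYqπ dα1π,
      jln p_Xq_Qp.symm (mem_po_pairL hQm) (mem_po_pairL hXqm) hQπ hXqπ dβ2π]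
    exact meetSec dα1β2 hOα1 hOβ2 (mem_po_pairL hZm) (mem_po_pairR hZm) hZπ
  -- the hexagon is nondegenerate
  have hpw7 : List.Pairwise (· ≠ ·) [Os, Pp, Xq, Yp, Qp, Yq, Xp] := by
    simp only [List.pairwise_cons, List.mem_cons, List.not_mem_nil, or_false,
      List.mem_singleton, forall_eq_or_imp, forall_eq, List.Pairwise.nil, and_true]
    exact ⟨⟨p_Os_Pp, p_Os_Xq, p_Os_Yp, p_Os_Qp, p_Os_Yq, p_Os_Xp⟩,
      ⟨p_Pp_Xq, p_Pp_Yp, p_Pp_Qp, p_Pp_Yq, p_Pp_Xp⟩,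
      ⟨p_Xq_Yp, p_Xq_Qp, p_Xq_Yq, p_Xq_Xp⟩,
      ⟨p_Yp_Qp, p_Yp_Yq, p_Yp_Xp⟩, ⟨p_Qp_Yq, p_Qp_Xp⟩, p_Yq_Xp, fun _ h => h.elim⟩
  have hcne : (pointsOf inc {γ1, π}, planesOf inc (pointsOf inc {γ1, π}))
      ≠ (pointsOf inc {γ2, π}, planesOf inc (pointsOf inc {γ2, π})) :=
    fun h => sLNe dγ1γ2 hOγ1 hOγ2 (congrArg Prod.fst h)
  -- apply Pappus in the plane π
  have hcol := hP (pointsOf inc {γ1, π}) (pointsOf inc {γ2, π})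
    (planesOf inc (pointsOf inc {γ1, π})) (planesOf inc (pointsOf inc {γ2, π}))
    Os Pp Xq Yp Qp Yq Xp
    (joinPlanes_isLine h2 h4 dγ1π) (joinPlanes_isLine h2 h4 dγ2π) hcne
    (mk_po_pair (mem_po_pairL hOsm) hOsπ) (mk_po_pair (mem_po_pairR hOsm) hOsπ)
    (mk_po_pair (mem_po_pairR hPm) hPπ) (mk_po_pair (mem_po_pairR hXqm) hXqπ)
    (mk_po_pair (mem_po_pairL hYm) hYπ) (mk_po_pair (mem_po_pairR hQm) hQπ)
    (mk_po_pair (mem_po_pairL hYqm) hYqπ) (mk_po_pair (mem_po_pairR hXm) hXπ)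
    hpw7 T Zq Zc cond1 cond2 cond3
  obtain ⟨l, lp, hl, hsub⟩ := hcol
  have hTl : T ∈ l := hsub (by simp)
  have hZql : Zq ∈ l := hsub (by simp)
  have hZl : Zc ∈ l := hsub (by simp)
  have hdZ : Zc ≠ Zq := secNe dα1β2 dβ1α2.symm ne_w1_w2 hOα1 hOβ2 hOα2 hOβ1 hZm hZπ hZqm hZqπ
  have hlp := (line_pts h4 hl hdZ hZl hZql).2
  have hγ0lp : γ0 ∈ lp := by
    rw [hlp]
    exact mk_pl_pair (hγ0m.1 Zc hZm) (hγ0m.2 Zq hZqm)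
  have hTγ0 : inc T γ0 := line_inc h4 hl hTl hγ0lp
  have hOT : O ≠ T := fun h => hπ (h ▸ hTπ)
  obtain ⟨x, y, _, hx, hy, _, hxy, _, _⟩ := h2.1 O T
  refine ⟨pointsOf inc {x, y}, planesOf inc {O, T}, ⟨O, T, x, y, hOT, hxy,
    mem_pl_pairL hx, mem_pl_pairL hy, mem_pl_pairR hx, mem_pl_pairR hy, rfl, rfl⟩, ?_⟩
  intro ρ hρ
  simp only [Set.mem_insert_iff, Set.mem_singleton_iff] at hρ
  rcases hρ with rfl | rfl | rfl
  · exact mk_pl_pair hOα0 (mem_po_pairL hTm)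
  · exact mk_pl_pair hOβ0 (mem_po_pairR hTm)
  · exact mk_pl_pair hOγ0 hTγ0
end

section
/- In a point-plane incidence structure satisfying Axioms [1]–[4], if two distinct planes α, β both contain a line ℓ (i.e., α, β ∈ ℓ_Π), then {α,β}^♮ = ℓ_P; in particular, any two distinct planes of a line determine the same point-set. -/
variable {Point Plane : Type*}

theorem two_planes_of_line_determine_point_set (inc : Point → Plane → Prop) [Nonempty Point] [Nonempty Plane]
    (h1 : Axiom1 inc) (h2 : Axiom2 inc) (h3 : Axiom3 inc) (h4 : Axiom4 inc)
    (lP : Set Point) (lPl : Set Plane) (hl : IsLine inc lP lPl)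
    (α β : Plane) (hα : α ∈ lPl) (hβ : β ∈ lPl) (hαβ : α ≠ β) :
    pointsOf inc {α, β} = lP := by
  obtain ⟨A, B, α₀, β₀, hAB, hαβ₀, hAα₀, hAβ₀, hBα₀, hBβ₀, hlP, hlPl⟩ := hl
  subst hlP; subst hlPl
  have hAα : inc A α := hα A (by simp)
  have hBα : inc B α := hα B (by simp)
  have hAβ : inc A β := hβ A (by simp)
  have hBβ : inc B β := hβ B (by simp)
  have e1 := (h4 A B α β hAB hαβ hAα hAβ hBα hBβ).2
  have e2 := (h4 A B α₀ β₀ hAB hαβ₀ hAα₀ hAβ₀ hBα₀ hBβ₀).2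
  rw [e1, e2]
end

section
/- In a point-plane incidence structure satisfying Axioms [1]–[4], if Σ is a set of three collinear planes containing at least two distinct planes α ≠ β, then Σ^♮ = {α,β}^♮ contains at least three points; consequently a set of planes with a non-collinear common-point structure ({δ₁,δ₂,δ₃}^♮ empty when intersected with ω^♮ but nonempty overall) has exactly one common point. -/
variable {Point Plane : Type*}

theorem claim9_final_step (inc : Point → Plane → Prop) [Nonempty Point] [Nonempty Plane]
    (h1 : Axiom1 inc) (h2 : Axiom2 inc) (h3 : Axiom3 inc) (h4 : Axiom4 inc) :
    (∀ (γ1 γ2 γ3 α β : Plane), CollinearPlanes inc {γ1, γ2, γ3} →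
      α ∈ ({γ1, γ2, γ3} : Set Plane) → β ∈ ({γ1, γ2, γ3} : Set Plane) → α ≠ β →
      pointsOf inc {γ1, γ2, γ3} = pointsOf inc {α, β} ∧
        AtLeastThree (pointsOf inc {γ1, γ2, γ3})) ∧
    (∀ (δ1 δ2 δ3 ω : Plane) (P : Point),
      P ∈ pointsOf inc {δ1, δ2, δ3} →
      {A : Point | inc A ω} ∩ pointsOf inc {δ1, δ2, δ3} = ∅ →
      δ1 ≠ δ2 →
      pointsOf inc {δ1, δ2, δ3} = {P}) := by

  have anti : ∀ (T T' : Set Plane), T ⊆ T' → pointsOf inc T' ⊆ pointsOf inc T :=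
    fun T T' h x hx π hπ => hx π (h hπ)
  have part1 : ∀ (γ1 γ2 γ3 α β : Plane), CollinearPlanes inc {γ1, γ2, γ3} →
      α ∈ ({γ1, γ2, γ3} : Set Plane) → β ∈ ({γ1, γ2, γ3} : Set Plane) → α ≠ β →
      pointsOf inc {γ1, γ2, γ3} = pointsOf inc {α, β} ∧
        AtLeastThree (pointsOf inc {γ1, γ2, γ3}) := by
    intro γ1 γ2 γ3 α β hcol hα hβ hαβ
    obtain ⟨lP, lPl, ⟨A, B, α0, β0, hAB, hα0β0, hAα0, hAβ0, hBα0, hBβ0, hlP, hlPl⟩, hsub⟩ := hcol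
    have hαm : α ∈ planesOf inc {A, B} := hlPl ▸ hsub hα
    have hβm : β ∈ planesOf inc {A, B} := hlPl ▸ hsub hβ
    have hAα : inc A α := hαm A (by simp)
    have hBα : inc B α := hαm B (by simp)
    have hAβ : inc A β := hβm A (by simp)
    have hBβ : inc B β := hβm B (by simp)
    have h4' := (h4 A B α β hAB hαβ hAα hAβ hBα hBβ).2
    have key : pointsOf inc {γ1, γ2, γ3} = pointsOf inc {α, β} := by
      apply Set.Subset.antisymm
      · apply anti
        intro π hπ
        rcases hπ with h | h
        · exact h ▸ hα
        · exact (Set.mem_singleton_iff.mp h) ▸ hβ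
      · rw [h4']
        apply anti
        intro π hπ
        exact hlPl ▸ hsub hπ
    exact ⟨key, key ▸ h2.2 α β⟩
  refine ⟨part1, ?_⟩
  intro δ1 δ2 δ3 ω P hP hdis h12
  have hP1 : inc P δ1 := hP δ1 (by simp)
  have hP2 : inc P δ2 := hP δ2 (by simp)
  have hP3 : inc P δ3 := hP δ3 (by simp)
  apply Set.eq_singleton_iff_unique_mem.mpr
  refine ⟨hP, fun Q hQ => ?_⟩
  by_contra hne
  have hQ1 : inc Q δ1 := hQ δ1 (by simp)
  have hQ2 : inc Q δ2 := hQ δ2 (by simp)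
  have hQ3 : inc Q δ3 := hQ δ3 (by simp)
  have hcol : CollinearPlanes inc {δ1, δ2, δ3} := by
    refine ⟨pointsOf inc {δ1, δ2}, planesOf inc {Q, P},
      ⟨Q, P, δ1, δ2, hne, h12, hQ1, hQ2, hP1, hP2, rfl, rfl⟩, ?_⟩
    intro π hπ
    rcases hπ with h | h | h
    · subst h; intro x hx; rcases hx with h | h
      · exact h ▸ hQ1
      · exact (Set.mem_singleton_iff.mp h) ▸ hP1
    · subst h; intro x hx; rcases hx with h | h
      · exact h ▸ hQ2
      · exact (Set.mem_singleton_iff.mp h) ▸ hP2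
    · rw [Set.mem_singleton_iff.mp h]; intro x hx; rcases hx with h | h
      · exact h ▸ hQ3
      · exact (Set.mem_singleton_iff.mp h) ▸ hP3
  have heq := (part1 δ1 δ2 δ3 δ1 δ2 hcol (by simp) (by simp) h12).1
  obtain ⟨R, hR⟩ := Set.nonempty_iff_ne_empty.mpr (h3.2 ω δ1 δ2)
  have hRω : inc R ω := hR ω (by simp)
  have hR1 : inc R δ1 := hR δ1 (by simp)
  have hR2 : inc R δ2 := hR δ2 (by simp)
  have hRmem : R ∈ pointsOf inc {δ1, δ2, δ3} := by
    rw [heq]; intro π hπ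
    rcases hπ with h | h
    · exact h ▸ hR1
    · exact (Set.mem_singleton_iff.mp h) ▸ hR2
  have : R ∈ ({A : Point | inc A ω} ∩ pointsOf inc {δ1, δ2, δ3}) := ⟨hRω, hRmem⟩
  rw [hdis] at this
  exact this
end
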